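/- arXiv:1603.02118 — 6 statements merged into one kernel-verified Lean document; each statement's English description precedes it below -/
import Mathlib

section
/- Let Δ ⊆ ℝⁿ be a nonempty compact convex set with lower support function g_Δ(u) = min_{v ∈ Δ} ⟨v, u⟩, and let g : ℝⁿ → ℝ satisfy |g(u) − g_Δ(u)| ≤ C for all u ∈ ℝⁿ, for some constant C ≥ 0. Then the concave Legendre–Fenchel transform ǧ is finite at x if and only if x ∈ Δ; moreover |ǧ(x)| ≤ C for all x ∈ Δ, and ǧ restricted to Δ is a concave function. -/
/-- Standard inner (dot) product on ℝⁿ. -/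
noncomputable def dotp {n : ℕ} (x u : Fin n → ℝ) : ℝ := ∑ i, x i * u i

/-- Concave Legendre–Fenchel transform ǧ(x) = inf_u (⟨x,u⟩ − g(u)), valued in [−∞,∞). -/
noncomputable def lfT {n : ℕ} (g : (Fin n → ℝ) → ℝ) (x : Fin n → ℝ) : EReal :=
  ⨅ u : Fin n → ℝ, ((dotp x u - g u : ℝ) : EReal)

/-- Lower support function of a set Δ: g_Δ(u) = inf_{v ∈ Δ} ⟨v,u⟩. -/
noncomputable def lsf {n : ℕ} (Δ : Set (Fin n → ℝ)) (u : Fin n → ℝ) : ℝ :=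
  sInf ((fun v => dotp v u) '' Δ)

/-!
For `x ∈ Δ` the bound `g ≤ g_Δ + C` gives `⟨x, u⟩ - g u ≥ ⟨x, u⟩ - g_Δ u - C ≥ -C`, while `u = 0` gives
`ǧ x ≤ -g 0 ≤ C`; as an infimum of affine functions of `x`, `ǧ` is concave on `Δ`. For `x ∉ Δ`,
separate `x` from `Δ` by a vector `w`, `⟨x, w⟩ < r < ⟨v, w⟩` for `v ∈ Δ`: along the ray `u = t • w`
the bound `g ≥ g_Δ - C ≥ t r - C` makes `⟨x, u⟩ - g u ≤ t (⟨x, w⟩ - r) + C` tend to `-∞`.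
-/

open Filter Set

theorem ConcaveOn.ciInf {E ι : Type*} [AddCommGroup E] [Module ℝ E] [Nonempty ι] {s : Set E}
    {f : ι → E → ℝ} (hf : ∀ i, ConcaveOn ℝ s (f i))
    (hbdd : ∀ x ∈ s, BddBelow (range fun i => f i x)) :
    ConcaveOn ℝ s fun x => ⨅ i, f i x := by
  refine ⟨(hf (Classical.arbitrary ι)).1, fun x hx y hy a b ha hb hab => le_ciInf fun i => ?_⟩
  calc a • (⨅ i, f i x) + b • (⨅ i, f i y)
      ≤ a • f i x + b • f i y := by
        gcongr
        · exact ciInf_le (hbdd x hx) i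
        · exact ciInf_le (hbdd y hy) i
    _ ≤ f i (a • x + b • y) := (hf i).2 hx hy ha hb hab

namespace ConcaveLegendre

variable {n : ℕ}

lemma dotp_eq_dotProduct (x u : Fin n → ℝ) : dotp x u = x ⬝ᵥ u := rfl

lemma continuous_dotp_left (u : Fin n → ℝ) : Continuous fun v : Fin n → ℝ => dotp v u := by
  simp only [dotp_eq_dotProduct]
  fun_prop

lemma concaveOn_dotp_sub (s : Set (Fin n → ℝ)) (hs : Convex ℝ s) (u : Fin n → ℝ) (c : ℝ) :
    ConcaveOn ℝ s fun x => dotp x u - c := by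
  refine ⟨hs, fun x _ y _ a b _ _ hab => le_of_eq ?_⟩
  simp only [dotp_eq_dotProduct, add_dotProduct, smul_dotProduct, smul_eq_mul]
  linear_combination (-c) * hab

lemma exists_dotp_separation {Δ : Set (Fin n → ℝ)} (hconv : Convex ℝ Δ) (hclosed : IsClosed Δ)
    {x : Fin n → ℝ} (hx : x ∉ Δ) : ∃ w r, dotp x w < r ∧ ∀ v ∈ Δ, r < dotp v w := by
  obtain ⟨f, r, hfx, hfΔ⟩ := geometric_hahn_banach_point_closed hconv hclosed hx
  have hf : ∀ v, f v = dotp v fun i => f fun j => if i = j then 1 else 0 :=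
    f.toLinearMap.pi_apply_eq_sum_univ
  exact ⟨_, r, hf x ▸ hfx, fun v hv => hf v ▸ hfΔ v hv⟩

variable {Δ : Set (Fin n → ℝ)}

lemma lsf_le_dotp (hc : IsCompact Δ) {x : Fin n → ℝ} (hx : x ∈ Δ) (u : Fin n → ℝ) :
    lsf Δ u ≤ dotp x u :=
  csInf_le (hc.image (continuous_dotp_left u)).bddBelow ⟨x, hx, rfl⟩

lemma lsf_zero (hne : Δ.Nonempty) : lsf Δ 0 = 0 := by
  simp [lsf, dotp, hne.image_const]

lemma mul_le_lsf_smul (hne : Δ.Nonempty) {w : Fin n → ℝ} {r : ℝ} (hr : ∀ v ∈ Δ, r ≤ dotp v w)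
    {t : ℝ} (ht : 0 ≤ t) : t * r ≤ lsf Δ (t • w) := by
  refine le_csInf (hne.image _) ?_
  rintro _ ⟨v, hv, rfl⟩
  simpa [dotp_eq_dotProduct, dotProduct_smul] using mul_le_mul_of_nonneg_left (hr v hv) ht

variable {g : (Fin n → ℝ) → ℝ} {x : Fin n → ℝ}

lemma lfT_eq_coe_ciInf (h : BddBelow (range fun u => dotp x u - g u)) :
    lfT g x = ((⨅ u, dotp x u - g u : ℝ) : EReal) :=
  (Monotone.map_ciInf_of_continuousAt continuous_coe_real_ereal.continuousAt
    (fun _ _ => EReal.coe_le_coe_iff.2) h).symm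

lemma lfT_eq_bot_of_tendsto {u : ℝ → Fin n → ℝ}
    (hu : Tendsto (fun t => dotp x (u t) - g (u t)) atTop atBot) : lfT g x = ⊥ := by
  refine (EReal.eq_bot_iff_forall_lt _).2 fun M => ?_
  obtain ⟨t, ht⟩ := (hu.eventually (eventually_lt_atBot M)).exists
  exact (iInf_le _ (u t)).trans_lt (EReal.coe_lt_coe_iff.2 ht)

variable {C : ℝ}

lemma neg_le_dotp_sub (hc : IsCompact Δ) (hx : x ∈ Δ) (hg : ∀ u, g u ≤ lsf Δ u + C)
    (u : Fin n → ℝ) : -C ≤ dotp x u - g u := by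
  linarith [hg u, lsf_le_dotp hc hx u]

lemma bddBelow_dotp_sub (hc : IsCompact Δ) (hx : x ∈ Δ) (hg : ∀ u, g u ≤ lsf Δ u + C) :
    BddBelow (range fun u => dotp x u - g u) :=
  ⟨-C, forall_mem_range.2 (neg_le_dotp_sub hc hx hg)⟩

lemma lfT_eq_bot_of_notMem (hne : Δ.Nonempty) (hconv : Convex ℝ Δ) (hc : IsCompact Δ)
    (hg : ∀ u, lsf Δ u - C ≤ g u) (hx : x ∉ Δ) : lfT g x = ⊥ := by
  obtain ⟨w, r, hxw, hΔw⟩ := exists_dotp_separation hconv hc.isClosed hx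
  refine lfT_eq_bot_of_tendsto (u := fun t => t • w) ?_
  have hline : Tendsto (fun t : ℝ => t * (dotp x w - r) + C) atTop atBot :=
    tendsto_atBot_add_const_right _ C (tendsto_id.atTop_mul_const_of_neg (by linarith))
  refine tendsto_atBot_mono' _ ?_ hline
  filter_upwards [eventually_ge_atTop 0] with t ht
  have hlsf := mul_le_lsf_smul hne (fun v hv => (hΔw v hv).le) ht
  simp only [dotp_eq_dotProduct, dotProduct_smul, smul_eq_mul] at hlsf ⊢
  linarith [hg (t • w)]

end ConcaveLegendre

open ConcaveLegendre in
theorem stmt2_general (n : ℕ) (Δ : Set (Fin n → ℝ))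
    (hne : Δ.Nonempty) (hc : IsCompact Δ) (hconv : Convex ℝ Δ)
    (g : (Fin n → ℝ) → ℝ) (C : ℝ)
    (hg : ∀ u, |g u - lsf Δ u| ≤ C) :
    (∀ x : Fin n → ℝ, lfT g x ≠ ⊥ ↔ x ∈ Δ) ∧
    (∀ x ∈ Δ, |(lfT g x).toReal| ≤ C) ∧
    ConcaveOn ℝ Δ (fun x => (lfT g x).toReal) := by
  have hg_upper : ∀ u, g u ≤ lsf Δ u + C := fun u => by linarith [(abs_le.1 (hg u)).2]
  have hg_lower : ∀ u, lsf Δ u - C ≤ g u := fun u => by linarith [(abs_le.1 (hg u)).1]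
  have hbdd := fun x (hx : x ∈ Δ) => bddBelow_dotp_sub hc hx hg_upper
  have hcoe := fun x (hx : x ∈ Δ) => lfT_eq_coe_ciInf (hbdd x hx)
  refine ⟨fun x => ⟨fun hx => ?_, fun hx => hcoe x hx ▸ EReal.coe_ne_bot _⟩, fun x hx => ?_, ?_⟩
  · by_contra hxΔ
    exact hx (lfT_eq_bot_of_notMem hne hconv hc hg_lower hxΔ)
  · rw [hcoe x hx, EReal.toReal_coe, abs_le]
    refine ⟨le_ciInf (neg_le_dotp_sub hc hx hg_upper), (ciInf_le (hbdd x hx) 0).trans ?_⟩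
    linarith [hg_lower 0, lsf_zero hne, show dotp x 0 = 0 from dotProduct_zero x]
  · refine (ConcaveOn.ciInf (fun u => concaveOn_dotp_sub Δ hconv u (g u)) hbdd).congr ?_
    intro x hx
    simp only [hcoe x hx, EReal.toReal_coe]

theorem stmt2 (n : ℕ) (Δ : Set (Fin n → ℝ))
    (hne : Δ.Nonempty) (hc : IsCompact Δ) (hconv : Convex ℝ Δ)
    (g : (Fin n → ℝ) → ℝ) (C : ℝ) (hC : 0 ≤ C)
    (hg : ∀ u, |g u - lsf Δ u| ≤ C) :
    (∀ x : Fin n → ℝ, lfT g x ≠ ⊥ ↔ x ∈ Δ) ∧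
    (∀ x ∈ Δ, |(lfT g x).toReal| ≤ C) ∧
    ConcaveOn ℝ Δ (fun x => (lfT g x).toReal) :=
  stmt2_general n Δ hne hc hconv g C hg
end

section
/- Let Θ ⊆ ℝⁿ be a compact convex set with vol(Θ) > 0 (Lebesgue measure), and let φ : Θ → ℝ be a bounded concave function. Then lim_{l → ∞, l ∈ ℕ*} (1/lⁿ) ∑_{e ∈ lΘ ∩ ℤⁿ} φ(e/l) = ∫_Θ φ(x) dx, where the sum runs over the integer lattice points e of the dilate lΘ = {l x : x ∈ Θ} (note e/l ∈ Θ for such e), and the integral is with respect to Lebesgue measure on ℝⁿ. -/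
open MeasureTheory Pointwise

/-!
The Riemann sum `l⁻ⁿ ∑_{e ∈ lΘ ∩ ℤⁿ} φ (e / l)` is exactly the integral of `x ↦ (1_Θ φ)(⌊l x⌋ / l)`,
a function that is constant on each cell `e / l + [0, 1/l)ⁿ`. As `l → ∞` this step function
converges to `1_Θ φ` at every point off the frontier of `Θ`: on the interior because a concave
function is continuous there, outside `closure Θ` because both vanish nearby. The frontier of a
convex set is Lebesgue-null, and the step functions are dominated by a constant on the compact
`1`-thickening of `Θ`, so dominated convergence gives the limit.
-/

open Filter Topology Set Metric

section LatticeFloor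

variable {ι : Type*}

lemma measurable_floor_pi : Measurable fun (y : ι → ℝ) (i : ι) => ⌊y i⌋ :=
  measurable_pi_lambda _ fun i => Int.measurable_floor.comp (measurable_pi_apply i)

variable [Fintype ι] {E : Type*} [NormedAddCommGroup E]

noncomputable def latticeFloor (r : ℝ) (x : ι → ℝ) : ι → ℝ := r⁻¹ • fun i => (⌊r * x i⌋ : ℝ)

lemma isometry_intCast_pi : Isometry fun (e : ι → ℤ) (i : ι) => (e i : ℝ) :=
  Isometry.of_nndist_eq fun _ _ => by simp [nndist_pi_def, Real.isometry_intCast.nndist_eq]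

lemma finite_setOf_intCast_mem {S : Set (ι → ℝ)} (hS : Bornology.IsBounded S) :
    {e : ι → ℤ | (fun i => (e i : ℝ)) ∈ S}.Finite :=
  (isCompact_of_isClosed_isBounded (isClosed_discrete _)
    (isometry_intCast_pi.antilipschitz.isBounded_preimage hS)).finite_of_discrete

lemma volume_floor_pi_eq (e : ι → ℤ) : volume {y : ι → ℝ | (fun i => ⌊y i⌋) = e} = 1 := by
  have hcell : {y : ι → ℝ | (fun i => ⌊y i⌋) = e} = univ.pi fun i => Ico (e i : ℝ) (e i + 1) := by
    ext y
    simp [funext_iff, Int.floor_eq_iff]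
  simp [hcell, volume_pi_pi, Real.volume_Ico]

lemma norm_indicator_le_indicator_cthickening {X : Type*} [PseudoMetricSpace X] {Θ : Set X}
    {φ : X → E} {M δ : ℝ} (hM₀ : 0 ≤ M) (hM : ∀ y ∈ Θ, ‖φ y‖ ≤ M) {x y : X} (hxy : dist x y ≤ δ) :
    ‖Θ.indicator φ y‖ ≤ (cthickening δ Θ).indicator (fun _ => M) x := by
  by_cases hy : y ∈ Θ
  · rw [indicator_of_mem hy, indicator_of_mem (mem_cthickening_of_dist_le x y δ Θ hy hxy)]
    exact hM y hy
  · rw [indicator_of_notMem hy, norm_zero]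
    exact indicator_nonneg (fun _ _ => hM₀) x

lemma dist_latticeFloor_le {r : ℝ} (hr : 0 < r) (x : ι → ℝ) : dist (latticeFloor r x) x ≤ r⁻¹ := by
  refine (dist_pi_le_iff (by positivity)).2 fun i => ?_
  have hdiff : latticeFloor r x i - x i = -(r⁻¹ * Int.fract (r * x i)) := by
    simp only [latticeFloor, Pi.smul_apply, smul_eq_mul, Int.fract]
    field_simp
    ring
  rw [Real.dist_eq, hdiff, abs_neg, abs_of_nonneg (by positivity)]
  exact mul_le_of_le_one_right (by positivity) (Int.fract_lt_one _).le

lemma tendsto_latticeFloor (x : ι → ℝ) : Tendsto (fun r => latticeFloor r x) atTop (𝓝 x) :=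
  tendsto_iff_dist_tendsto_zero.2 <| squeeze_zero' (Eventually.of_forall fun _ => dist_nonneg)
    ((eventually_gt_atTop 0).mono fun _ hr => dist_latticeFloor_le hr x) tendsto_inv_atTop_zero

variable [NormedSpace ℝ E]

theorem tendsto_integral_indicator_comp_latticeFloor {Θ : Set (ι → ℝ)} {φ : (ι → ℝ) → E}
    (hc : IsCompact Θ) (hfr : volume (frontier Θ) = 0) (hφ : ContinuousOn φ (interior Θ))
    (hbdd : ∃ M, ∀ x ∈ Θ, ‖φ x‖ ≤ M) :
    Tendsto (fun r => ∫ x, Θ.indicator φ (latticeFloor r x)) atTop (𝓝 (∫ x in Θ, φ x)) := by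
  obtain ⟨M, hM⟩ := hbdd
  rw [← integral_indicator hc.isClosed.measurableSet]
  refine tendsto_integral_filter_of_dominated_convergence
    ((cthickening 1 Θ).indicator fun _ => |M|) ?_ ?_ ?_ ?_
  · refine Eventually.of_forall fun r => StronglyMeasurable.aestronglyMeasurable ?_
    exact (StronglyMeasurable.of_discrete (f := fun e : ι → ℤ =>
      Θ.indicator φ (r⁻¹ • fun i => (e i : ℝ)))).comp_measurable
      (measurable_floor_pi.comp (measurable_const_smul r))
  · filter_upwards [eventually_ge_atTop 1] with r hr
    refine Eventually.of_forall fun x => norm_indicator_le_indicator_cthickening (abs_nonneg M)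
      (fun y hy => (hM y hy).trans (le_abs_self M)) ?_
    rw [dist_comm]
    exact (dist_latticeFloor_le (by linarith) x).trans (inv_le_one_of_one_le₀ hr)
  · exact (integrable_indicator_iff isClosed_cthickening.measurableSet).2
      (integrableOn_const hc.cthickening.measure_lt_top.ne)
  · filter_upwards [measure_eq_zero_iff_ae_notMem.1 hfr] with x hx
    exact (hφ.continuousAt_indicator hx).tendsto.comp (tendsto_latticeFloor x)

variable [CompleteSpace E]

theorem integral_comp_floor_pi {g : (ι → ℤ) → E} (hg : (Function.support g).Finite) :
    ∫ y : ι → ℝ, g (fun i => ⌊y i⌋) = ∑ᶠ e, g e := by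
  set cell : (ι → ℤ) → Set (ι → ℝ) := fun e => {y | (fun i => ⌊y i⌋) = e}
  have hcell : ∀ e, MeasurableSet (cell e) := fun e =>
    measurable_floor_pi (measurableSet_singleton e)
  have hvol : ∀ e, volume (cell e) = 1 := volume_floor_pi_eq
  have hsum : (fun y : ι → ℝ => g fun i => ⌊y i⌋) =
      fun y => ∑ e ∈ hg.toFinset, (cell e).indicator (fun _ => g e) y := by
    funext y
    rw [Finset.sum_eq_single (fun i => ⌊y i⌋)]
    · simp [cell]
    · intro e _ he
      exact indicator_of_notMem (Ne.symm he) _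
    · intro hy
      simpa [cell] using hy
  rw [hsum, integral_finsetSum, finsum_eq_sum _ hg]
  · refine Finset.sum_congr rfl fun e _ => ?_
    rw [integral_indicator_const _ (hcell e), measureReal_def, hvol, ENNReal.toReal_one,
      one_smul]
  · intro e _
    exact (integrable_indicator_iff (hcell e)).2 (integrableOn_const (by simp [hvol]))

theorem integral_indicator_comp_latticeFloor {Θ : Set (ι → ℝ)} (hΘ : Bornology.IsBounded Θ)
    (φ : (ι → ℝ) → E) {r : ℝ} (hr : 0 < r) :
    ∫ x, Θ.indicator φ (latticeFloor r x) =
      (r ^ Fintype.card ι)⁻¹ •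
        ∑ᶠ e ∈ {e : ι → ℤ | (fun i => (e i : ℝ)) ∈ r • Θ}, φ (r⁻¹ • fun i => (e i : ℝ)) := by
  have hset : {e : ι → ℤ | (fun i => (e i : ℝ)) ∈ r • Θ} =
      (fun e : ι → ℤ => r⁻¹ • fun i => (e i : ℝ)) ⁻¹' Θ :=
    ext fun e => mem_smul_set_iff_inv_smul_mem₀ hr.ne' _ _
  have hsupp :
      (Function.support fun e : ι → ℤ => Θ.indicator φ (r⁻¹ • fun i => (e i : ℝ))).Finite :=
    (finite_setOf_intCast_mem (hΘ.smul₀ r)).subset fun e he => by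
      rw [hset]
      exact support_indicator_subset he
  calc ∫ x, Θ.indicator φ (latticeFloor r x)
      = ∫ x, (fun y : ι → ℝ => Θ.indicator φ (r⁻¹ • fun i => (⌊y i⌋ : ℝ))) (r • x) := rfl
    _ = (r ^ Fintype.card ι)⁻¹ • ∫ y : ι → ℝ, Θ.indicator φ (r⁻¹ • fun i => (⌊y i⌋ : ℝ)) := by
        rw [Measure.integral_comp_smul volume
            (fun y : ι → ℝ => Θ.indicator φ (r⁻¹ • fun i => (⌊y i⌋ : ℝ))),
          Module.finrank_fintype_fun_eq_card, abs_of_pos (by positivity)]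
    _ = _ := by
        rw [integral_comp_floor_pi hsupp, finsum_mem_def, hset]
        simp only [← indicator_comp_right]
        rfl

end LatticeFloor

theorem stmt3_general (n : ℕ) (Θ : Set (Fin n → ℝ))
    (hc : IsCompact Θ) (hconv : Convex ℝ Θ)
    (φ : (Fin n → ℝ) → ℝ) (hconc : ConcaveOn ℝ Θ φ)
    (hbdd : ∃ M : ℝ, ∀ x ∈ Θ, |φ x| ≤ M) :
    Filter.Tendsto
      (fun l : ℕ => (1 / (l : ℝ) ^ n) *
        ∑ᶠ e ∈ {e : Fin n → ℤ | (fun i => (e i : ℝ)) ∈ (l : ℝ) • Θ},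
          φ ((l : ℝ)⁻¹ • fun i => (e i : ℝ)))
      Filter.atTop (nhds (∫ x in Θ, φ x)) := by
  have hlim := (tendsto_integral_indicator_comp_latticeFloor hc (hconv.addHaar_frontier volume)
    hconc.continuousOn_interior (by simpa only [Real.norm_eq_abs] using hbdd)).comp
    tendsto_natCast_atTop_atTop
  refine hlim.congr' ?_
  filter_upwards [eventually_gt_atTop 0] with l hl
  rw [Function.comp_apply, integral_indicator_comp_latticeFloor hc.isBounded φ (Nat.cast_pos.2 hl),
    Fintype.card_fin, smul_eq_mul, one_div]
  rfl

theorem stmt3 (n : ℕ) (Θ : Set (Fin n → ℝ))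
    (hc : IsCompact Θ) (hconv : Convex ℝ Θ) (hvol : 0 < volume Θ)
    (φ : (Fin n → ℝ) → ℝ) (hconc : ConcaveOn ℝ Θ φ)
    (hbdd : ∃ M : ℝ, ∀ x ∈ Θ, |φ x| ≤ M) :
    Filter.Tendsto
      (fun l : ℕ => (1 / (l : ℝ) ^ n) *
        ∑ᶠ e ∈ {e : Fin n → ℤ | (fun i => (e i : ℝ)) ∈ (l : ℝ) • Θ},
          φ ((l : ℝ)⁻¹ • fun i => (e i : ℝ)))
      Filter.atTop (nhds (∫ x in Θ, φ x)) :=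
  stmt3_general n Θ hc hconv φ hconc hbdd
end

section
/- Let Δ_D and Δ_A be nonempty compact convex subsets of ℝⁿ with 0 ∈ Δ_A, with lower support functions g_{Δ_D}(u) = min_{v ∈ Δ_D} ⟨v, u⟩ and g_{Δ_A}(u) = min_{v ∈ Δ_A} ⟨v, u⟩. Let g_D, g_A : ℝⁿ → ℝ be functions such that sup_{u ∈ ℝⁿ} |g_D(u) − g_{Δ_D}(u)| and sup_{u ∈ ℝⁿ} |g_A(u) − g_{Δ_A}(u)| are finite. Then lim_{l → ∞, l ∈ ℕ} (1/l^{n+1}) ∫_{lΔ_D + Δ_A} (l g_D + g_A)ˇ(x) dx = ∫_{Δ_D} (g_D)ˇ(x) dx, where lΔ_D + Δ_A = {l v + w : v ∈ Δ_D, w ∈ Δ_A} is the Minkowski sum (on which the transform (l g_D + g_A)ˇ is finite) and integrals are with respect to Lebesgue measure. -/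
open MeasureTheory Pointwise

open Topology Filter Metric Set

/-!
Substituting `x = l • y` turns the normalized integral into `∫ (1/l) (l gD + gA)ˇ(l • y) dy`.
If `CD`, `CA` bound `|gD - lsf ΔD|` and `|gA - lsf ΔA|`, then on `l • ΔD + ΔA` the transform
`(l gD + gA)ˇ` is at least `-(l CD + CA)` and at most its `u = 0` term `-(l gD 0 + gA 0)`, so the
new integrands are bounded by `CD + CA` and supported in a fixed neighbourhood of `ΔD`. Off `ΔD`
they eventually vanish; on `ΔD` they converge to `gDˇ`, because `gA ≤ CA` (as `0 ∈ ΔA`) while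
`gA u / l → 0` for each fixed `u`. Dominated convergence concludes.
-/

variable {n : ℕ}

lemma dotp_smul_left (a : ℝ) (x u : Fin n → ℝ) : dotp (a • x) u = a * dotp x u := by
  simp only [dotp, Finset.mul_sum, Pi.smul_apply, smul_eq_mul, mul_assoc]

lemma dotp_add_left (x y u : Fin n → ℝ) : dotp (x + y) u = dotp x u + dotp y u := by
  simp only [dotp, Pi.add_apply, add_mul, Finset.sum_add_distrib]

@[simp]
lemma dotp_zero_left (u : Fin n → ℝ) : dotp 0 u = 0 := by simp [dotp]

@[simp]
lemma dotp_zero_right (x : Fin n → ℝ) : dotp x 0 = 0 := by simp [dotp]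

lemma continuous_dotp_left (u : Fin n → ℝ) : Continuous fun x : Fin n → ℝ => dotp x u := by
  unfold dotp; fun_prop

section lfT

variable {g : (Fin n → ℝ) → ℝ} {x : Fin n → ℝ} {a : ℝ}

lemma lfT_le_coe (g : (Fin n → ℝ) → ℝ) (x u : Fin n → ℝ) :
    lfT g x ≤ ((dotp x u - g u : ℝ) : EReal) :=
  iInf_le _ u

lemma lfT_ne_top (g : (Fin n → ℝ) → ℝ) (x : Fin n → ℝ) : lfT g x ≠ ⊤ :=
  ne_top_of_le_ne_top (EReal.coe_ne_top _) (lfT_le_coe g x 0)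

lemma coe_le_lfT (h : ∀ u, a ≤ dotp x u - g u) : (a : EReal) ≤ lfT g x :=
  le_iInf fun u => EReal.coe_le_coe_iff.2 (h u)

lemma lfT_ne_bot (h : ∀ u, a ≤ dotp x u - g u) : lfT g x ≠ ⊥ :=
  ne_bot_of_le_ne_bot (EReal.coe_ne_bot a) (coe_le_lfT h)

lemma le_toReal_lfT (h : ∀ u, a ≤ dotp x u - g u) : a ≤ (lfT g x).toReal := by
  simpa using EReal.toReal_le_toReal (coe_le_lfT h) (EReal.coe_ne_bot a) (lfT_ne_top g x)

lemma toReal_lfT_le (h : ∀ u, a ≤ dotp x u - g u) (u : Fin n → ℝ) :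
    (lfT g x).toReal ≤ dotp x u - g u := by
  have hle := EReal.toReal_le_toReal (lfT_le_coe g x u) (lfT_ne_bot h) (EReal.coe_ne_top _)
  rwa [EReal.toReal_coe] at hle

lemma exists_dotp_sub_lt_of_toReal_lfT_lt (h : ∀ u, a ≤ dotp x u - g u) {b : ℝ}
    (hb : (lfT g x).toReal < b) : ∃ u, dotp x u - g u < b := by
  rw [← EReal.coe_lt_coe_iff, EReal.coe_toReal (lfT_ne_top g x) (lfT_ne_bot h)] at hb
  obtain ⟨u, hu⟩ := iInf_lt_iff.1 hb
  exact ⟨u, EReal.coe_lt_coe_iff.1 hu⟩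

lemma abs_toReal_lfT_le {C : ℝ} (h : ∀ u, -C ≤ dotp x u - g u) (h0 : -C ≤ g 0) :
    |(lfT g x).toReal| ≤ C := by
  have hle := toReal_lfT_le h 0
  rw [dotp_zero_right] at hle
  exact abs_le.2 ⟨le_toReal_lfT h, by linarith⟩

lemma measurable_toReal_lfT (g : (Fin n → ℝ) → ℝ) : Measurable fun x => (lfT g x).toReal :=
  (UpperSemicontinuous.measurable (upperSemicontinuous_iInf fun u =>
    (continuous_coe_real_ereal.comp
      ((continuous_dotp_left u).sub continuous_const)).upperSemicontinuous)).ereal_toReal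

theorem tendsto_toReal_lfT_smul {g h : (Fin n → ℝ) → ℝ} {y : Fin n → ℝ} {a C : ℝ}
    (hy : ∀ u, a ≤ dotp y u - g u) (hh : ∀ u, h u ≤ C) :
    Tendsto (fun l : ℕ => 1 / (l : ℝ) * (lfT (fun u => l * g u + h u) ((l : ℝ) • y)).toReal)
      atTop (𝓝 (lfT g y).toReal) := by
  set c := (lfT g y).toReal
  have hexpand : ∀ (l : ℝ) u, dotp (l • y) u - (l * g u + h u) = l * (dotp y u - g u) - h u :=
    fun l u => by rw [dotp_smul_left]; ring
  have hlower : ∀ l : ℕ, 0 < l → ∀ u,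
      l * c - C ≤ dotp ((l : ℝ) • y) u - (l * g u + h u) := fun l hl u => by
    have hc := toReal_lfT_le hy u
    rw [hexpand]
    nlinarith [hh u, (Nat.cast_pos.2 hl : (0 : ℝ) < l)]
  rw [tendsto_order]
  constructor
  · intro a' ha'
    have hlim : Tendsto (fun l : ℕ => c - C / l) atTop (𝓝 c) := by
      simpa using tendsto_const_nhds.sub (tendsto_const_div_atTop_nhds_zero_nat C)
    filter_upwards [hlim.eventually (lt_mem_nhds ha'), eventually_gt_atTop 0] with l hl' hl
    have hl0 : (0 : ℝ) < l := Nat.cast_pos.2 hl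
    calc a' < c - C / l := hl'
      _ = 1 / l * (l * c - C) := by field_simp
      _ ≤ _ := by gcongr; exact le_toReal_lfT (hlower l hl)
  · intro b hb
    obtain ⟨u, hu⟩ := exists_dotp_sub_lt_of_toReal_lfT_lt hy hb
    have hlim : Tendsto (fun l : ℕ => dotp y u - g u - h u / l) atTop (𝓝 (dotp y u - g u)) := by
      simpa using tendsto_const_nhds.sub (tendsto_const_div_atTop_nhds_zero_nat (h u))
    filter_upwards [hlim.eventually (gt_mem_nhds hu), eventually_gt_atTop 0] with l hl' hl
    have hl0 : (0 : ℝ) < l := Nat.cast_pos.2 hl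
    have hle := toReal_lfT_le (hlower l hl) u
    rw [hexpand] at hle
    calc _ ≤ 1 / (l : ℝ) * (l * (dotp y u - g u) - h u) := by gcongr
      _ = dotp y u - g u - h u / l := by field_simp
      _ < b := hl'

end lfT

lemma lsf_le_dotp {S : Set (Fin n → ℝ)} (hS : IsCompact S) {v : Fin n → ℝ} (hv : v ∈ S)
    (u : Fin n → ℝ) : lsf S u ≤ dotp v u :=
  csInf_le (hS.image (continuous_dotp_left u)).bddBelow (mem_image_of_mem _ hv)

@[simp]
lemma lsf_zero (S : Set (Fin n → ℝ)) : lsf S 0 = 0 := by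
  rcases S.eq_empty_or_nonempty with rfl | hS
  · simp [lsf]
  · simp [lsf, hS.image_const]

lemma neg_le_dotp_sub_of_mem {S : Set (Fin n → ℝ)} {g : (Fin n → ℝ) → ℝ} {C : ℝ}
    (hS : IsCompact S) (hg : ∀ u, |g u - lsf S u| ≤ C) {v : Fin n → ℝ} (hv : v ∈ S)
    (u : Fin n → ℝ) : -C ≤ dotp v u - g u := by
  linarith [lsf_le_dotp hS hv u, (abs_le.1 (hg u)).2]

section MinkowskiSum

variable {ΔD ΔA : Set (Fin n → ℝ)} {gD gA : (Fin n → ℝ) → ℝ} {CD CA : ℝ}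

lemma abs_toReal_lfT_le_of_mem_smul_add (hDc : IsCompact ΔD) (hAc : IsCompact ΔA)
    (hCD : ∀ u, |gD u - lsf ΔD u| ≤ CD) (hCA : ∀ u, |gA u - lsf ΔA u| ≤ CA) {l : ℝ}
    (hl : 0 ≤ l) {x : Fin n → ℝ} (hx : x ∈ l • ΔD + ΔA) :
    |(lfT (fun u => l * gD u + gA u) x).toReal| ≤ l * CD + CA := by
  obtain ⟨_, ⟨v, hv, rfl⟩, w, hw, rfl⟩ := hx
  refine abs_toReal_lfT_le (fun u => ?_) ?_
  · have hv' := neg_le_dotp_sub_of_mem hDc hCD hv u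
    have hw' := neg_le_dotp_sub_of_mem hAc hCA hw u
    rw [dotp_add_left, dotp_smul_left]
    nlinarith
  · have hD := (abs_le.1 (hCD 0)).1
    have hA := (abs_le.1 (hCA 0)).1
    rw [lsf_zero, sub_zero] at hD hA
    nlinarith

lemma mem_cthickening_of_smul_mem_smul_add {R l : ℝ} (hl : 0 < l) (hR : ΔA ⊆ closedBall 0 R)
    {y : Fin n → ℝ} (hy : l • y ∈ l • ΔD + ΔA) : y ∈ cthickening (R / l) ΔD := by
  obtain ⟨_, ⟨v, hv, rfl⟩, w, hw, hvw⟩ := hy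
  refine mem_cthickening_of_dist_le y v _ _ hv ?_
  have hy : y = v + l⁻¹ • w := by
    rw [← inv_smul_smul₀ hl.ne' y, ← hvw, smul_add, inv_smul_smul₀ hl.ne']
  rw [hy, dist_eq_norm, add_sub_cancel_left, norm_smul, Real.norm_eq_abs, abs_inv,
    abs_of_pos hl, inv_mul_eq_div]
  gcongr
  exact mem_closedBall_zero_iff.1 (hR hw)

lemma eventually_smul_notMem_smul_add {R : ℝ} (hDc : IsClosed ΔD) (hR : ΔA ⊆ closedBall 0 R)
    {y : Fin n → ℝ} (hy : y ∉ ΔD) : ∀ᶠ l : ℕ in atTop, (l : ℝ) • y ∉ (l : ℝ) • ΔD + ΔA := by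
  rw [← hDc.closure_eq, closure_eq_iInter_cthickening] at hy
  simp only [mem_iInter, not_forall] at hy
  obtain ⟨δ, hδ, hyδ⟩ := hy
  filter_upwards [(tendsto_const_div_atTop_nhds_zero_nat R).eventually (ge_mem_nhds hδ),
    eventually_gt_atTop 0] with l hRl hl hmem
  exact hyδ (cthickening_mono hRl _
    (mem_cthickening_of_smul_mem_smul_add (Nat.cast_pos.2 hl) hR hmem))

end MinkowskiSum

section Rescaling

variable {ΔD ΔA : Set (Fin n → ℝ)} {gD gA : (Fin n → ℝ) → ℝ} {CD CA : ℝ}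

noncomputable def rescaledIntegrand (ΔD ΔA : Set (Fin n → ℝ)) (gD gA : (Fin n → ℝ) → ℝ)
    (l : ℝ) (y : Fin n → ℝ) : ℝ :=
  1 / l * (l • ΔD + ΔA).indicator (fun x => (lfT (fun u => l * gD u + gA u) x).toReal) (l • y)

lemma integral_rescaledIntegrand {l : ℝ} (hl : 0 < l) (hS : MeasurableSet (l • ΔD + ΔA)) :
    ∫ y, rescaledIntegrand ΔD ΔA gD gA l y
      = 1 / l ^ (n + 1) * ∫ x in l • ΔD + ΔA, (lfT (fun u => l * gD u + gA u) x).toReal := by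
  simp only [rescaledIntegrand]
  rw [integral_const_mul, Measure.integral_comp_smul, integral_indicator hS,
    Module.finrank_fin_fun, smul_eq_mul, abs_of_pos (by positivity), ← mul_assoc]
  congr 1
  field_simp
  ring

lemma measurable_rescaledIntegrand {l : ℝ} (hS : MeasurableSet (l • ΔD + ΔA)) :
    Measurable (rescaledIntegrand ΔD ΔA gD gA l) :=
  measurable_const.mul (((measurable_toReal_lfT _).indicator hS).comp (measurable_const_smul l))

lemma abs_rescaledIntegrand_le {R l : ℝ} (hDc : IsCompact ΔD) (hAc : IsCompact ΔA)
    (hCD : ∀ u, |gD u - lsf ΔD u| ≤ CD) (hCA : ∀ u, |gA u - lsf ΔA u| ≤ CA)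
    (hR : ΔA ⊆ closedBall 0 R) (hR0 : 0 ≤ R) (hl : 1 ≤ l) (y : Fin n → ℝ) :
    |rescaledIntegrand ΔD ΔA gD gA l y| ≤ (cthickening R ΔD).indicator (fun _ => CD + CA) y := by
  have hl0 : 0 < l := zero_lt_one.trans_le hl
  have hCD0 : 0 ≤ CD := (abs_nonneg _).trans (hCD 0)
  have hCA0 : 0 ≤ CA := (abs_nonneg _).trans (hCA 0)
  by_cases hy : l • y ∈ l • ΔD + ΔA
  · have hyR : y ∈ cthickening R ΔD := cthickening_mono (div_le_self hR0 hl) _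
      (mem_cthickening_of_smul_mem_smul_add hl0 hR hy)
    rw [rescaledIntegrand, indicator_of_mem hy, indicator_of_mem hyR, abs_mul,
      abs_of_pos (one_div_pos.2 hl0)]
    calc 1 / l * |(lfT (fun u => l * gD u + gA u) (l • y)).toReal|
        ≤ 1 / l * (l * CD + CA) := by
          gcongr; exact abs_toReal_lfT_le_of_mem_smul_add hDc hAc hCD hCA hl0.le hy
      _ = CD + CA / l := by field_simp
      _ ≤ CD + CA := by gcongr; exact div_le_self hCA0 hl
  · rw [rescaledIntegrand, indicator_of_notMem hy, mul_zero, abs_zero]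
    exact indicator_nonneg (fun _ _ => add_nonneg hCD0 hCA0) y

lemma tendsto_rescaledIntegrand (hDc : IsCompact ΔD) (hAc : IsCompact ΔA) {R : ℝ}
    (hR : ΔA ⊆ closedBall 0 R) (h0A : (0 : Fin n → ℝ) ∈ ΔA)
    (hCD : ∀ u, |gD u - lsf ΔD u| ≤ CD) (hCA : ∀ u, |gA u - lsf ΔA u| ≤ CA)
    (y : Fin n → ℝ) :
    Tendsto (fun l : ℕ => rescaledIntegrand ΔD ΔA gD gA l y) atTop
      (𝓝 (ΔD.indicator (fun x => (lfT gD x).toReal) y)) := by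
  by_cases hy : y ∈ ΔD
  · have hmem : ∀ l : ℝ, l • y ∈ l • ΔD + ΔA := fun l => by
      simpa using add_mem_add (smul_mem_smul_set (a := l) hy) h0A
    have hgA : ∀ u, gA u ≤ CA := fun u => by
      linarith [lsf_le_dotp hAc h0A u, dotp_zero_left u, (abs_le.1 (hCA u)).2]
    simp only [rescaledIntegrand, indicator_of_mem (hmem _), indicator_of_mem hy]
    exact tendsto_toReal_lfT_smul (neg_le_dotp_sub_of_mem hDc hCD hy) hgA
  · rw [indicator_of_notMem hy]
    refine tendsto_const_nhds.congr' ?_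
    filter_upwards [eventually_smul_notMem_smul_add hDc.isClosed hR hy] with l hl
    rw [rescaledIntegrand, indicator_of_notMem hl, mul_zero]

end Rescaling

theorem stmt5_general (n : ℕ) (ΔD ΔA : Set (Fin n → ℝ))
    (hDc : IsCompact ΔD) (hAc : IsCompact ΔA)
    (h0A : (0 : Fin n → ℝ) ∈ ΔA)
    (gD gA : (Fin n → ℝ) → ℝ)
    (hgD : ∃ C : ℝ, ∀ u, |gD u - lsf ΔD u| ≤ C)
    (hgA : ∃ C : ℝ, ∀ u, |gA u - lsf ΔA u| ≤ C) :
    Filter.Tendsto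
      (fun l : ℕ => (1 / (l : ℝ) ^ (n + 1)) *
        ∫ x in ((l : ℝ) • ΔD + ΔA),
          (lfT (fun u => (l : ℝ) * gD u + gA u) x).toReal)
      Filter.atTop (nhds (∫ x in ΔD, (lfT gD x).toReal)) := by
  obtain ⟨CD, hCD⟩ := hgD
  obtain ⟨CA, hCA⟩ := hgA
  obtain ⟨R, hR⟩ := hAc.isBounded.subset_closedBall 0
  have hR0 : 0 ≤ R := nonempty_closedBall.1 ⟨0, hR h0A⟩
  have hS : ∀ l : ℝ, MeasurableSet (l • ΔD + ΔA) :=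
    fun l => ((hDc.smul l).add hAc).isClosed.measurableSet
  have hlim : Tendsto (fun l : ℕ => ∫ y, rescaledIntegrand ΔD ΔA gD gA l y) atTop
      (𝓝 (∫ y, ΔD.indicator (fun x => (lfT gD x).toReal) y)) :=
    tendsto_integral_filter_of_dominated_convergence _
      (Eventually.of_forall fun l => (measurable_rescaledIntegrand (hS l)).aestronglyMeasurable)
      ((eventually_ge_atTop 1).mono fun l hl => ae_of_all _ fun y =>
        abs_rescaledIntegrand_le hDc hAc hCD hCA hR hR0 (Nat.one_le_cast.2 hl) y)
      ((integrableOn_const hDc.cthickening.measure_lt_top.ne).integrable_indicator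
        isClosed_cthickening.measurableSet)
      (ae_of_all _ (tendsto_rescaledIntegrand hDc hAc hR h0A hCD hCA))
  rw [integral_indicator hDc.isClosed.measurableSet] at hlim
  refine hlim.congr' ((eventually_gt_atTop 0).mono fun l hl => ?_)
  exact integral_rescaledIntegrand (Nat.cast_pos.2 hl) (hS l)

theorem stmt5 (n : ℕ) (ΔD ΔA : Set (Fin n → ℝ))
    (hDne : ΔD.Nonempty) (hDc : IsCompact ΔD) (hDconv : Convex ℝ ΔD)
    (hAne : ΔA.Nonempty) (hAc : IsCompact ΔA) (hAconv : Convex ℝ ΔA)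
    (h0A : (0 : Fin n → ℝ) ∈ ΔA)
    (gD gA : (Fin n → ℝ) → ℝ)
    (hgD : ∃ C : ℝ, ∀ u, |gD u - lsf ΔD u| ≤ C)
    (hgA : ∃ C : ℝ, ∀ u, |gA u - lsf ΔA u| ≤ C) :
    Filter.Tendsto
      (fun l : ℕ => (1 / (l : ℝ) ^ (n + 1)) *
        ∫ x in ((l : ℝ) • ΔD + ΔA),
          (lfT (fun u => (l : ℝ) * gD u + gA u) x).toReal)
      Filter.atTop (nhds (∫ x in ΔD, (lfT gD x).toReal)) :=
  stmt5_general n ΔD ΔA hDc hAc h0A gD gA hgD hgA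
end

section
/- Let Δ ⊆ ℝⁿ be a compact convex set with nonempty interior and lower support function g_Δ(u) = min_{v ∈ Δ} ⟨v, u⟩. Let g_0, g_1 : ℝⁿ → ℝ be smooth strictly concave functions such that g_0 − g_Δ and g_1 − g_Δ are bounded on ℝⁿ, and such that for each t ∈ [0,1] the gradient map ∇g_t of g_t := (1−t) g_0 + t g_1 is a smooth diffeomorphism from ℝⁿ onto the interior of Δ. Then the function t ↦ ∫_Δ ǧ_t(x) dx is differentiable on [0,1), and its right derivative at t = 0 equals −∫_Δ (g_1 − g_0)(G_0(x)) dx, where G_0 = (∇g_0)^{−1} : int(Δ) → ℝⁿ is the inverse of the gradient map of g_0. -/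
open MeasureTheory

/-- Gradient map of g : ℝⁿ → ℝ (vector of partial derivatives). -/
noncomputable def gradv {n : ℕ} (g : (Fin n → ℝ) → ℝ) (u : Fin n → ℝ) : Fin n → ℝ :=
  fun i => fderiv ℝ g u (Pi.single i 1)

namespace Stmt6Aux

variable {n : ℕ}

lemma dotp_sub (x u v : Fin n → ℝ) : dotp x (u - v) = dotp x u - dotp x v := by
  simp [dotp, mul_sub, Finset.sum_sub_distrib]

lemma dotp_zero_right (x : Fin n → ℝ) : dotp x 0 = 0 := by simp [dotp]

lemma continuous_dotp_left (u : Fin n → ℝ) : Continuous fun v : Fin n → ℝ => dotp v u := by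
  unfold dotp
  exact continuous_finset_sum _ fun i _ => (continuous_apply i).mul continuous_const

lemma continuous_dotp_right (x : Fin n → ℝ) : Continuous fun u : Fin n → ℝ => dotp x u := by
  unfold dotp
  exact continuous_finset_sum _ fun i _ => continuous_const.mul (continuous_apply i)

lemma fderiv_eq_dotp (g : (Fin n → ℝ) → ℝ) (u₀ w : Fin n → ℝ) :
    fderiv ℝ g u₀ w = dotp (gradv g u₀) w := by
  have hw : w = ∑ i : Fin n, w i • (Pi.single i 1 : Fin n → ℝ) := by
    ext j
    simp [Finset.sum_apply, Pi.single_apply]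
  conv_lhs => rw [hw]
  rw [map_sum]
  simp only [ContinuousLinearMap.map_smul, smul_eq_mul]
  unfold dotp gradv
  exact Finset.sum_congr rfl fun i _ => mul_comm _ _

lemma tangent_le {g : (Fin n → ℝ) → ℝ} (hgd : Differentiable ℝ g)
    (hc : ConcaveOn ℝ Set.univ g) (u₀ u : Fin n → ℝ) :
    g u ≤ g u₀ + fderiv ℝ g u₀ (u - u₀) := by
  set φ : ℝ → ℝ := fun r => g (r • (u - u₀) + u₀) with hφ
  have hφc : ConcaveOn ℝ Set.univ φ := by
    have := hc.comp_affineMap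
      (AffineMap.mk (fun r : ℝ => r • (u - u₀) + u₀)
        { toFun := fun r : ℝ => r • (u - u₀)
          map_add' := by intro a b; simp [add_smul]
          map_smul' := by intro a b; simp [smul_smul] } (by intro p v; simp [add_smul]; abel))
    exact this
  have hd : HasDerivAt φ (fderiv ℝ g u₀ (u - u₀)) 0 := by
    have h1 : HasDerivAt (fun r : ℝ => r • (u - u₀) + u₀) (u - u₀) 0 := by
      simpa using ((hasDerivAt_id (0:ℝ)).smul_const (u - u₀)).add_const u₀
    have h2 : HasFDerivAt g (fderiv ℝ g u₀) ((0:ℝ) • (u - u₀) + u₀) := by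
      simpa using (hgd u₀).hasFDerivAt
    exact h2.comp_hasDerivAt 0 h1
  have hs : slope φ 0 1 ≤ fderiv ℝ g u₀ (u - u₀) :=
    hφc.slope_le_of_hasDerivAt (Set.mem_univ 0) (Set.mem_univ 1) one_pos hd
  have : slope φ 0 1 = φ 1 - φ 0 := by simp [slope_def_field]
  rw [this] at hs
  have h0 : φ 0 = g u₀ := by simp [hφ]
  have h1 : φ 1 = g u := by simp [hφ]
  rw [h0, h1] at hs
  linarith

lemma min_of_grad {g : (Fin n → ℝ) → ℝ} (hgd : Differentiable ℝ g)
    (hc : ConcaveOn ℝ Set.univ g) {x u₀ : Fin n → ℝ} (h : gradv g u₀ = x) (u : Fin n → ℝ) :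
    dotp x u₀ - g u₀ ≤ dotp x u - g u := by
  have ht := tangent_le hgd hc u₀ u
  rw [fderiv_eq_dotp, h, dotp_sub] at ht
  linarith

lemma uniq_min {f : (Fin n → ℝ) → ℝ} (hf : StrictConvexOn ℝ Set.univ f)
    {ustar u : Fin n → ℝ} (hmin : ∀ v, f ustar ≤ f v) (hu : f u = f ustar) : u = ustar := by
  by_contra hne
  have := hf.2 (Set.mem_univ u) (Set.mem_univ ustar) hne
    (by norm_num : (0:ℝ) < 1/2) (by norm_num : (0:ℝ) < 1/2) (by norm_num)
  rw [hu] at this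
  have h2 := hmin ((1/2 : ℝ) • u + (1/2 : ℝ) • ustar)
  simp only [smul_eq_mul] at this h2
  linarith

lemma convexOn_dotp (x : Fin n → ℝ) : ConvexOn ℝ Set.univ (fun u => dotp x u) := by
  refine ⟨convex_univ, fun u _ v _ a b ha hb hab => le_of_eq ?_⟩
  unfold dotp
  rw [smul_eq_mul, smul_eq_mul, Finset.mul_sum, Finset.mul_sum, ← Finset.sum_add_distrib]
  refine Finset.sum_congr rfl fun i _ => ?_
  simp only [Pi.add_apply, Pi.smul_apply, smul_eq_mul]
  ring

lemma dotp_comm (x u : Fin n → ℝ) : dotp x u = dotp u x := by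
  unfold dotp
  exact Finset.sum_congr rfl fun i _ => mul_comm _ _

lemma continuous_dotp2 : Continuous (fun p : (Fin n → ℝ) × (Fin n → ℝ) => dotp p.1 p.2) := by
  unfold dotp
  exact continuous_finset_sum _ fun i _ =>
    ((continuous_apply i).comp continuous_fst).mul ((continuous_apply i).comp continuous_snd)

lemma strictConcaveOn_smul {f : (Fin n → ℝ) → ℝ} {c : ℝ} (hc : 0 < c)
    (hf : StrictConcaveOn ℝ Set.univ f) : StrictConcaveOn ℝ Set.univ (fun x => c • f x) := by
  refine ⟨hf.1, fun x hx y hy hne a b ha hb hab => ?_⟩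
  have h := hf.2 hx hy hne ha hb hab
  simp only [smul_eq_mul] at h ⊢
  nlinarith

lemma between_abs_le {q a b : ℝ} (h : (a ≤ q ∧ q ≤ b) ∨ (b ≤ q ∧ q ≤ a)) :
    |q - a| ≤ |b - a| := by
  have h1 := neg_abs_le (b - a)
  have h2 := le_abs_self (b - a)
  rcases h with ⟨ha, hb⟩ | ⟨ha, hb⟩ <;> rw [abs_le] <;>
    exact ⟨by linarith, by linarith⟩

end Stmt6Aux

set_option maxHeartbeats 4000000

theorem stmt6 (n : ℕ) (Δ : Set (Fin n → ℝ))
    (hΔc : IsCompact Δ) (hΔconv : Convex ℝ Δ) (hΔint : (interior Δ).Nonempty)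
    (g₀ g₁ : (Fin n → ℝ) → ℝ)
    (hg₀s : ContDiff ℝ (⊤ : ℕ∞) g₀) (hg₁s : ContDiff ℝ (⊤ : ℕ∞) g₁)
    (hg₀c : StrictConcaveOn ℝ Set.univ g₀) (hg₁c : StrictConcaveOn ℝ Set.univ g₁)
    (hb₀ : ∃ C : ℝ, ∀ u, |g₀ u - lsf Δ u| ≤ C)
    (hb₁ : ∃ C : ℝ, ∀ u, |g₁ u - lsf Δ u| ≤ C)
    -- for each t ∈ [0,1], the gradient of g_t = (1−t)g₀ + tg₁ is a smooth
    -- diffeomorphism from ℝⁿ onto the interior of Δ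
    (hdiffeo : ∀ t ∈ Set.Icc (0 : ℝ) 1,
      Set.BijOn (gradv (fun u => (1 - t) * g₀ u + t * g₁ u)) Set.univ (interior Δ) ∧
      ∃ Gt : (Fin n → ℝ) → (Fin n → ℝ), ContDiffOn ℝ (⊤ : ℕ∞) Gt (interior Δ) ∧
        ∀ x ∈ interior Δ, gradv (fun u => (1 - t) * g₀ u + t * g₁ u) (Gt x) = x)
    -- G₀ is the inverse of the gradient map of g₀
    (G₀ : (Fin n → ℝ) → (Fin n → ℝ))
    (hG₀l : ∀ u, G₀ (gradv g₀ u) = u)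
    (hG₀r : ∀ x ∈ interior Δ, gradv g₀ (G₀ x) = x) :
    (∀ t ∈ Set.Ico (0 : ℝ) 1,
      DifferentiableWithinAt ℝ
        (fun t : ℝ => ∫ x in Δ, (lfT (fun u => (1 - t) * g₀ u + t * g₁ u) x).toReal)
        (Set.Icc 0 1) t) ∧
    HasDerivWithinAt
      (fun t : ℝ => ∫ x in Δ, (lfT (fun u => (1 - t) * g₀ u + t * g₁ u) x).toReal)
      (-∫ x in Δ, (g₁ (G₀ x) - g₀ (G₀ x)))
      (Set.Ici 0) 0 := by
  classical
  obtain ⟨C₀, hC₀⟩ := hb₀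
  obtain ⟨C₁, hC₁⟩ := hb₁
  obtain ⟨x₀, hx₀⟩ := hΔint
  have hΔne : Δ.Nonempty := ⟨x₀, interior_subset hx₀⟩
  choose hbij G hGs hGinv using hdiffeo
  set gt : ℝ → (Fin n → ℝ) → ℝ := fun t u => (1 - t) * g₀ u + t * g₁ u with hgtdef
  set U : ℝ → (Fin n → ℝ) → (Fin n → ℝ) :=
    fun t => if h : t ∈ Set.Icc (0:ℝ) 1 then G t h else 0 with hUdef
  have hU : ∀ t (ht : t ∈ Set.Icc (0:ℝ) 1), U t = G t ht := by
    intro t ht; simp only [hUdef, dif_pos ht]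
  -- smoothness / concavity
  have hgts : ∀ t : ℝ, ContDiff ℝ (⊤ : ℕ∞) (gt t) := fun t =>
    (contDiff_const.mul hg₀s).add (contDiff_const.mul hg₁s)
  have hgtd : ∀ t, Differentiable ℝ (gt t) := fun t => (hgts t).differentiable (by simp)
  have hgtc : ∀ t ∈ Set.Icc (0:ℝ) 1, ConcaveOn ℝ Set.univ (gt t) := by
    intro t ht
    have he : gt t = (1 - t) • g₀ + t • g₁ := by
      funext u; simp [hgtdef, smul_eq_mul]
    rw [he]
    exact ((hg₀c.concaveOn).smul (by linarith [ht.2])).add ((hg₁c.concaveOn).smul ht.1)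
  have hgtsc : ∀ t ∈ Set.Icc (0:ℝ) 1, StrictConcaveOn ℝ Set.univ (gt t) := by
    intro t ht
    rcases eq_or_lt_of_le ht.2 with h1 | h1
    · have he : gt t = g₁ := by subst h1; funext u; norm_num [hgtdef]
      rw [he]; exact hg₁c
    · have he : gt t = (1 - t) • g₀ + t • g₁ := by
        funext u; simp [hgtdef, smul_eq_mul]
      rw [he]
      exact (Stmt6Aux.strictConcaveOn_smul (by linarith) hg₀c).add_concaveOn ((hg₁c.concaveOn).smul ht.1)
  have hUinv : ∀ t (ht : t ∈ Set.Icc (0:ℝ) 1), ∀ x ∈ interior Δ,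
      gradv (gt t) (U t x) = x := by
    intro t ht x hx
    rw [hU t ht]
    exact hGinv t ht x hx
  set F : ℝ → (Fin n → ℝ) → ℝ := fun t x => dotp x (U t x) - gt t (U t x) with hFdef
  have hmin : ∀ t ∈ Set.Icc (0:ℝ) 1, ∀ x ∈ interior Δ, ∀ u,
      F t x ≤ dotp x u - gt t u := by
    intro t ht x hx u
    exact Stmt6Aux.min_of_grad (hgtd t) (hgtc t ht) (hUinv t ht x hx) u
  have hlfT : ∀ t ∈ Set.Icc (0:ℝ) 1, ∀ x ∈ interior Δ,
      lfT (gt t) x = ((F t x : ℝ) : EReal) := by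
    intro t ht x hx
    refine le_antisymm ?_ ?_
    · exact iInf_le _ (U t x)
    · refine le_iInf fun u => ?_
      exact_mod_cast hmin t ht x hx u
  -- bounds
  have hC₀0 : 0 ≤ C₀ := (abs_nonneg _).trans (hC₀ 0)
  have hC₁0 : 0 ≤ C₁ := (abs_nonneg _).trans (hC₁ 0)
  set C := C₀ + C₁ with hCdef
  have hC0 : 0 ≤ C := by linarith
  have hlsf_le : ∀ v ∈ Δ, ∀ u, lsf Δ u ≤ dotp v u := by
    intro v hv u
    exact csInf_le ((hΔc.image (Stmt6Aux.continuous_dotp_left u)).bddBelow) ⟨v, hv, rfl⟩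
  have hlsf0 : lsf Δ (0 : Fin n → ℝ) = 0 := by
    unfold lsf
    have he : (fun v : Fin n → ℝ => dotp v 0) = fun _ => (0:ℝ) := by
      funext v; simp [dotp]
    rw [he, hΔne.image_const]
    exact csInf_singleton 0
  have hgtC : ∀ t ∈ Set.Icc (0:ℝ) 1, ∀ u, |gt t u - lsf Δ u| ≤ C := by
    intro t ht u
    have h0 := abs_le.1 (hC₀ u)
    have h1 := abs_le.1 (hC₁ u)
    have e : gt t u - lsf Δ u = (1-t)*(g₀ u - lsf Δ u) + t*(g₁ u - lsf Δ u) := by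
      simp only [hgtdef]; ring
    rw [abs_le, e]
    constructor <;> nlinarith [ht.1, ht.2]
  have hB : ∀ u, |g₁ u - g₀ u| ≤ C := by
    intro u
    have h0 := abs_le.1 (hC₀ u)
    have h1 := abs_le.1 (hC₁ u)
    rw [abs_le]; constructor <;> linarith
  have hFub : ∀ t ∈ Set.Icc (0:ℝ) 1, ∀ x ∈ interior Δ, F t x ≤ C := by
    intro t ht x hx
    have h := hmin t ht x hx 0
    rw [Stmt6Aux.dotp_zero_right] at h
    have h2 := (abs_le.1 (hgtC t ht 0)).1
    rw [hlsf0] at h2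
    linarith
  have hFlb : ∀ t ∈ Set.Icc (0:ℝ) 1, ∀ x ∈ interior Δ, -C ≤ F t x := by
    intro t ht x hx
    have h1 := hlsf_le x (interior_subset hx) (U t x)
    have h2 := (abs_le.1 (hgtC t ht (U t x))).2
    simp only [hFdef]
    rw [Stmt6Aux.dotp_comm x (U t x)] at h1 ⊢
    linarith
  -- measure facts
  haveI : IsFiniteMeasure (volume.restrict Δ) :=
    ⟨by rw [Measure.restrict_apply_univ]; exact hΔc.measure_lt_top⟩
  have hfront : volume (frontier Δ) = 0 := hΔconv.addHaar_frontier volume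
  have haeeq : Δ =ᵐ[volume] interior Δ := by
    rw [MeasureTheory.ae_eq_set]
    constructor
    · refine measure_mono_null ?_ hfront
      intro y hy
      exact ⟨subset_closure hy.1, hy.2⟩
    · rw [Set.diff_eq_empty.2 interior_subset]; simp
  have hrestr : volume.restrict Δ = volume.restrict (interior Δ) :=
    Measure.restrict_congr_set haeeq
  have haein : ∀ᵐ x ∂(volume.restrict Δ), x ∈ interior Δ := by
    rw [hrestr]; exact ae_restrict_mem isOpen_interior.measurableSet
  -- measurability and integrability
  have hUcontOn : ∀ t (ht : t ∈ Set.Icc (0:ℝ) 1), ContinuousOn (U t) (interior Δ) := by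
    intro t ht; rw [hU t ht]; exact (hGs t ht).continuousOn
  have hFcont : ∀ t (ht : t ∈ Set.Icc (0:ℝ) 1), ContinuousOn (F t) (interior Δ) := by
    intro t ht
    simp only [hFdef]
    refine ContinuousOn.sub ?_ ((hgts t).continuous.comp_continuousOn (hUcontOn t ht))
    exact Stmt6Aux.continuous_dotp2.comp_continuousOn (continuousOn_id.prodMk (hUcontOn t ht))
  have hFmeas : ∀ t (ht : t ∈ Set.Icc (0:ℝ) 1),
      AEStronglyMeasurable (F t) (volume.restrict Δ) := by
    intro t ht
    rw [hrestr]
    exact (hFcont t ht).aestronglyMeasurable isOpen_interior.measurableSet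
  have hhmeas : ∀ t (ht : t ∈ Set.Icc (0:ℝ) 1),
      AEStronglyMeasurable (fun x => g₁ (U t x) - g₀ (U t x)) (volume.restrict Δ) := by
    intro t ht
    rw [hrestr]
    refine ContinuousOn.aestronglyMeasurable ?_ isOpen_interior.measurableSet
    exact ((hg₁s.continuous.comp_continuousOn (hUcontOn t ht)).sub
      (hg₀s.continuous.comp_continuousOn (hUcontOn t ht)))
  have hFint : ∀ t (ht : t ∈ Set.Icc (0:ℝ) 1), Integrable (F t) (volume.restrict Δ) := by
    intro t ht
    refine Integrable.mono' (integrable_const C) (hFmeas t ht) ?_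
    filter_upwards [haein] with x hx
    rw [Real.norm_eq_abs, abs_le]
    exact ⟨hFlb t ht x hx, hFub t ht x hx⟩
  have hhint : ∀ t (ht : t ∈ Set.Icc (0:ℝ) 1),
      Integrable (fun x => g₁ (U t x) - g₀ (U t x)) (volume.restrict Δ) := by
    intro t ht
    refine Integrable.mono' (integrable_const C) (hhmeas t ht) ?_
    filter_upwards with x
    rw [Real.norm_eq_abs]
    exact hB _
  set m : ℝ → ℝ := fun t => -∫ x in Δ, (g₁ (U t x) - g₀ (U t x)) with hmdef
  set Φ : ℝ → ℝ := fun t => ∫ x in Δ, (lfT (gt t) x).toReal with hΦdef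
  have hΦeq : ∀ t ∈ Set.Icc (0:ℝ) 1, Φ t = ∫ x in Δ, F t x := by
    intro t ht
    simp only [hΦdef]
    apply integral_congr_ae
    filter_upwards [haein] with x hx
    rw [hlfT t ht x hx]
    exact EReal.toReal_coe _
  have hkey : ∀ s ∈ Set.Icc (0:ℝ) 1, ∀ t ∈ Set.Icc (0:ℝ) 1,
      Φ t ≤ Φ s + (t - s) * m s := by
    intro s hs t ht
    have h1 : Φ t ≤ ∫ x in Δ, (F s x - (t - s) * (g₁ (U s x) - g₀ (U s x))) := by
      rw [hΦeq t ht]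
      refine integral_mono_ae (hFint t ht) ((hFint s hs).sub ((hhint s hs).const_mul _)) ?_
      filter_upwards [haein] with x hx
      have h := hmin t ht x hx (U s x)
      have e : dotp x (U s x) - gt t (U s x)
          = F s x - (t - s) * (g₁ (U s x) - g₀ (U s x)) := by
        simp only [hFdef, hgtdef]; ring
      rw [e] at h
      exact h
    rw [integral_sub (hFint s hs) ((hhint s hs).const_mul _), MeasureTheory.integral_const_mul,
      ← hΦeq s hs] at h1
    simp only [hmdef] at h1 ⊢
    linarith
  -- continuity of t ↦ U t x within [0,1]
  have hUcont : ∀ s ∈ Set.Icc (0:ℝ) 1, ∀ x ∈ interior Δ,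
      ContinuousWithinAt (fun t => U t x) (Set.Icc 0 1) s := by
    intro s hs x hx
    obtain ⟨ε, hε, hball⟩ : ∃ ε > 0, Metric.ball x ε ⊆ Δ := by
      obtain ⟨ε, hε, hball⟩ := Metric.isOpen_iff.1 isOpen_interior x hx
      exact ⟨ε, hε, hball.trans interior_subset⟩
    have hcoer : ∀ u : Fin n → ℝ, lsf Δ u ≤ dotp x u - ε/2 * ‖u‖ := by
      intro u
      set w : Fin n → ℝ := fun i => if 0 ≤ u i then 1 else -1 with hw
      have hwn : ‖w‖ ≤ 1 := by
        rw [pi_norm_le_iff_of_nonneg zero_le_one]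
        intro i
        simp only [hw]
        split <;> simp
      have hv : x - (ε/2) • w ∈ Δ := by
        apply hball
        rw [Metric.mem_ball, dist_eq_norm]
        have e : x - (ε/2) • w - x = -((ε/2) • w) := by abel
        rw [e, norm_neg, norm_smul, Real.norm_eq_abs, abs_of_pos (half_pos hε)]
        calc ε/2 * ‖w‖ ≤ ε/2 * 1 := mul_le_mul_of_nonneg_left hwn (le_of_lt (half_pos hε))
        _ < ε := by linarith
      have h1 := hlsf_le _ hv u
      have h2 : dotp (x - (ε/2) • w) u = dotp x u - ε/2 * dotp w u := by
        unfold dotp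
        rw [Finset.mul_sum, ← Finset.sum_sub_distrib]
        refine Finset.sum_congr rfl fun i _ => ?_
        simp only [Pi.sub_apply, Pi.smul_apply, smul_eq_mul]
        ring
      rw [h2] at h1
      have h3 : ‖u‖ ≤ dotp w u := by
        have habs : dotp w u = ∑ i, |u i| := by
          unfold dotp
          refine Finset.sum_congr rfl fun i _ => ?_
          simp only [hw]
          split
          · rename_i h; rw [one_mul, abs_of_nonneg h]
          · rename_i h; rw [neg_one_mul, abs_of_neg (lt_of_not_ge h)]
        rw [habs]
        refine (pi_norm_le_iff_of_nonneg
          (Finset.sum_nonneg fun i _ => abs_nonneg _)).2 fun i => ?_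
        rw [Real.norm_eq_abs]
        exact Finset.single_le_sum (fun j _ => abs_nonneg (u j)) (Finset.mem_univ i)
      have h4 := mul_le_mul_of_nonneg_left h3 (le_of_lt (half_pos hε))
      linarith
    have hR : ∀ t ∈ Set.Icc (0:ℝ) 1, ‖U t x‖ ≤ 4*C/ε := by
      intro t ht
      have h1 := hcoer (U t x)
      have h2 := (abs_le.1 (hgtC t ht (U t x))).2
      have h3 := hFub t ht x hx
      have h4 : F t x = dotp x (U t x) - gt t (U t x) := by simp only [hFdef]
      have h5 : ε/2 * ‖U t x‖ ≤ 2*C := by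
        have h6 := hlsf_le x (interior_subset hx) (U t x)
        linarith
      rw [le_div_iff₀ hε]
      nlinarith
    rw [Metric.continuousWithinAt_iff]
    intro δ hδ
    set f : (Fin n → ℝ) → ℝ := fun u => dotp x u - gt s u with hfdef
    have hfc : Continuous f := (Stmt6Aux.continuous_dotp_right x).sub (hgts s).continuous
    have hfmin : ∀ u, f (U s x) ≤ f u := by
      intro u
      have h := hmin s hs x hx u
      simpa only [hFdef, hfdef] using h
    have hfstrict : StrictConvexOn ℝ Set.univ f := by
      have e : f = (fun u => dotp x u) + (-(gt s)) := by
        funext u; simp [hfdef, sub_eq_add_neg]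
      rw [e]
      exact (Stmt6Aux.convexOn_dotp x).add_strictConvexOn (hgtsc s hs).neg
    set K' := Metric.closedBall (0 : Fin n → ℝ) (4*C/ε) ∩ {u | δ ≤ dist u (U s x)} with hK'
    have hK'c : IsCompact K' :=
      (isCompact_closedBall _ _).inter_right
        (isClosed_le continuous_const (continuous_id.dist continuous_const))
    by_cases hne : K'.Nonempty
    · obtain ⟨u₁, hu₁K, hu₁min⟩ := hK'c.exists_isMinOn hne hfc.continuousOn
      have hu₁ne : u₁ ≠ U s x := by
        intro h
        have h2 := hu₁K.2
        rw [h] at h2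
        simp only [Set.mem_setOf_eq, dist_self] at h2
        linarith
      have hη : 0 < f u₁ - f (U s x) := by
        rcases lt_or_eq_of_le (hfmin u₁) with h | h
        · linarith
        · exact absurd (Stmt6Aux.uniq_min hfstrict hfmin h.symm) hu₁ne
      refine ⟨(f u₁ - f (U s x)) / (2*C+1), div_pos hη (by linarith), ?_⟩
      intro t htI hdist
      by_contra hge
      have hmem : U t x ∈ K' :=
        ⟨mem_closedBall_zero_iff.2 (hR t htI), not_lt.1 hge⟩
      have hle := isMinOn_iff.1 hu₁min _ hmem
      have e1 : f (U t x) = F t x + (t - s) * (g₁ (U t x) - g₀ (U t x)) := by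
        simp only [hfdef, hFdef, hgtdef]; ring
      have e2 : dotp x (U s x) - gt t (U s x)
          = f (U s x) - (t - s) * (g₁ (U s x) - g₀ (U s x)) := by
        simp only [hfdef, hgtdef]; ring
      have h5 := hmin t htI x hx (U s x)
      rw [e2] at h5
      have habs : |t - s| < (f u₁ - f (U s x)) / (2*C+1) := by rwa [Real.dist_eq] at hdist
      have hmul : |t - s| * (2*C+1) < f u₁ - f (U s x) := by
        rw [← lt_div_iff₀ (by linarith : (0:ℝ) < 2*C+1)]
        exact habs
      have k1 : (t - s) * (g₁ (U t x) - g₀ (U t x)) ≤ |t - s| * C := by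
        calc (t - s) * (g₁ (U t x) - g₀ (U t x))
            ≤ |(t - s) * (g₁ (U t x) - g₀ (U t x))| := le_abs_self _
        _ = |t - s| * |g₁ (U t x) - g₀ (U t x)| := abs_mul _ _
        _ ≤ |t - s| * C := mul_le_mul_of_nonneg_left (hB _) (abs_nonneg _)
      have k2 : -((t - s) * (g₁ (U s x) - g₀ (U s x))) ≤ |t - s| * C := by
        calc -((t - s) * (g₁ (U s x) - g₀ (U s x)))
            ≤ |(t - s) * (g₁ (U s x) - g₀ (U s x))| := neg_le_abs _
        _ = |t - s| * |g₁ (U s x) - g₀ (U s x)| := abs_mul _ _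
        _ ≤ |t - s| * C := mul_le_mul_of_nonneg_left (hB _) (abs_nonneg _)
      have habs0 := abs_nonneg (t - s)
      nlinarith [hle, e1, h5, k1, k2, hmul, habs0]
    · refine ⟨1, one_pos, ?_⟩
      intro t htI hdist
      by_contra hge
      exact hne ⟨U t x, mem_closedBall_zero_iff.2 (hR t htI), not_lt.1 hge⟩
  have hmcont : ∀ s ∈ Set.Icc (0:ℝ) 1, ContinuousWithinAt m (Set.Icc 0 1) s := by
    intro s hs
    simp only [hmdef]
    apply ContinuousWithinAt.neg
    apply continuousWithinAt_of_dominated (bound := fun _ => C)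
    · filter_upwards [self_mem_nhdsWithin] with t ht using hhmeas t ht
    · filter_upwards with t
      filter_upwards with x
      rw [Real.norm_eq_abs]
      exact hB _
    · exact integrable_const C
    · filter_upwards [haein] with x hx
      exact ((hg₁s.continuous.sub hg₀s.continuous).continuousAt).comp_continuousWithinAt
        (hUcont s hs x hx)
  have hasDeriv : ∀ s ∈ Set.Icc (0:ℝ) 1, HasDerivWithinAt Φ (m s) (Set.Icc 0 1) s := by
    intro s hs
    rw [hasDerivWithinAt_iff_tendsto_slope]
    have hev : ∀ᶠ t in nhdsWithin s (Set.Icc (0:ℝ) 1 \ {s}),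
        dist (slope Φ s t) (m s) ≤ dist (m t) (m s) := by
      filter_upwards [self_mem_nhdsWithin] with t ht
      obtain ⟨htI, hts⟩ := ht
      have htne : t ≠ s := by simpa using hts
      have h1 := hkey s hs t htI
      have h2 := hkey t htI s hs
      rw [slope_def_field, Real.dist_eq, Real.dist_eq]
      rcases lt_or_gt_of_ne htne with hlt | hgt
      · have hd : t - s < 0 := by linarith
        have e1 : m s ≤ (Φ t - Φ s)/(t - s) := by
          rw [le_div_iff_of_neg hd]; nlinarith
        have e2 : (Φ t - Φ s)/(t - s) ≤ m t := by
          rw [div_le_iff_of_neg hd]; nlinarith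
        exact Stmt6Aux.between_abs_le (Or.inl ⟨e1, e2⟩)
      · have hd : 0 < t - s := by linarith
        have e1 : (Φ t - Φ s)/(t - s) ≤ m s := by
          rw [div_le_iff₀ hd]; nlinarith
        have e2 : m t ≤ (Φ t - Φ s)/(t - s) := by
          rw [le_div_iff₀ hd]; nlinarith
        exact Stmt6Aux.between_abs_le (Or.inr ⟨e2, e1⟩)
    have hm : Filter.Tendsto m (nhdsWithin s (Set.Icc (0:ℝ) 1 \ {s})) (nhds (m s)) :=
      (hmcont s hs).tendsto.mono_left (nhdsWithin_mono s Set.diff_subset)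
    have hd : Filter.Tendsto (fun t => dist (m t) (m s))
        (nhdsWithin s (Set.Icc (0:ℝ) 1 \ {s})) (nhds 0) :=
      tendsto_iff_dist_tendsto_zero.1 hm
    refine tendsto_iff_dist_tendsto_zero.2
      (squeeze_zero' ?_ hev hd)
    filter_upwards with t using dist_nonneg
  -- conclusion
  have h0 : (0:ℝ) ∈ Set.Icc (0:ℝ) 1 := ⟨le_refl 0, zero_le_one⟩
  constructor
  · intro t ht
    exact (hasDeriv t ⟨ht.1, le_of_lt ht.2⟩).differentiableWithinAt
  · have hset : Set.Icc (0:ℝ) 1 =ᶠ[nhds (0:ℝ)] Set.Ici (0:ℝ) := by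
      rw [Filter.eventuallyEq_set]
      filter_upwards [Iio_mem_nhds one_pos] with y hy
      simp only [Set.mem_Icc, Set.mem_Ici]
      exact ⟨fun h => h.1, fun h => ⟨h, le_of_lt hy⟩⟩
    have hm0 : m 0 = -∫ x in Δ, (g₁ (G₀ x) - g₀ (G₀ x)) := by
      simp only [hmdef]
      congr 1
      apply integral_congr_ae
      filter_upwards [haein] with x hx
      have hinv := hUinv 0 h0 x hx
      have e : gt 0 = g₀ := by funext u; simp only [hgtdef]; ring
      rw [e] at hinv
      have hUG : G₀ x = U 0 x := by
        conv_lhs => rw [← hinv]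
        exact hG₀l _
      rw [← hUG]
    rw [← hm0]
    exact (hasDerivWithinAt_congr_set hset).1 (hasDeriv 0 h0)
end

section
/- Let Δ ⊆ ℝⁿ be a compact convex set with nonempty interior and lower support function g_Δ(u) = min_{v ∈ Δ} ⟨v, u⟩. Let g_0, g_1 : ℝⁿ → ℝ be smooth strictly concave functions such that g_0 − g_Δ and g_1 − g_Δ are bounded on ℝⁿ, and such that for each t ∈ [0,1] the gradient map ∇g_t of g_t := (1−t) g_0 + t g_1 is a smooth diffeomorphism from ℝⁿ onto the interior of Δ. Then for every s ∈ [0,1), the right derivative at t = s of the function t ↦ ∫_Δ ǧ_t(x) dx equals −∫_{ℝⁿ} (g_1 − g_0)(u) · |det Hess g_s(u)| du, where Hess g_s denotes the Hessian matrix of g_s. -/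
open MeasureTheory

/-- Hessian matrix of g : ℝⁿ → ℝ. -/
noncomputable def hessM {n : ℕ} (g : (Fin n → ℝ) → ℝ) (u : Fin n → ℝ) :
    Matrix (Fin n) (Fin n) ℝ :=
  Matrix.of fun i j =>
    fderiv ℝ (fun v => fderiv ℝ g v (Pi.single j 1)) u (Pi.single i 1)

open Set Filter Topology

namespace Stmt7Aux

variable {n : ℕ}

lemma dotp_sub (x u v : Fin n → ℝ) : dotp x (u - v) = dotp x u - dotp x v := by
  simp [dotp, mul_sub, Finset.sum_sub_distrib]

lemma sum_single (v : Fin n → ℝ) : ∑ i, v i • (Pi.single i 1 : Fin n → ℝ) = v := by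
  funext j
  rw [Finset.sum_apply]
  simp [Pi.single_apply]

lemma fderiv_apply_eq_dotp {g : (Fin n → ℝ) → ℝ} {u : Fin n → ℝ}
    (v : Fin n → ℝ) : fderiv ℝ g u v = dotp (gradv g u) v := by
  conv_lhs => rw [← sum_single v]
  rw [map_sum]
  simp [gradv, dotp, mul_comm]

lemma concave_fderiv_le {g : (Fin n → ℝ) → ℝ} (hg : ConcaveOn ℝ Set.univ g)
    (hd : Differentiable ℝ g) (u₀ u : Fin n → ℝ) :
    g u ≤ g u₀ + fderiv ℝ g u₀ (u - u₀) := by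
  set c : ℝ →ᵃ[ℝ] (Fin n → ℝ) := AffineMap.lineMap u₀ u with hc
  have hcomp : ConcaveOn ℝ Set.univ (g ∘ c) := by
    have := hg.comp_affineMap c
    simpa using this
  have hc0 : c 0 = u₀ := by simp [hc]
  have hc1 : c 1 = u := by simp [hc]
  have hcd : HasDerivAt (fun r : ℝ => c r) (u - u₀) 0 := by
    have : (fun r : ℝ => c r) = fun r : ℝ => r • (u - u₀) + u₀ := by
      funext r
      simp [hc, AffineMap.lineMap_apply_module]
      module
    rw [this]
    simpa using ((hasDerivAt_id (0:ℝ)).smul_const (u - u₀)).add_const u₀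
  have hgc : HasDerivAt (g ∘ c) (fderiv ℝ g u₀ (u - u₀)) 0 := by
    have := (hd (c 0)).hasFDerivAt.comp_hasDerivAt 0 hcd
    rwa [hc0] at this
  have := hcomp.slope_le_of_hasDerivAt (mem_univ (0:ℝ)) (mem_univ (1:ℝ)) one_pos hgc
  rw [slope_def_field] at this
  simp only [Function.comp_apply, hc0, hc1] at this
  linarith

lemma keyMin {g : (Fin n → ℝ) → ℝ} (hgc : ConcaveOn ℝ Set.univ g)
    (hgd : Differentiable ℝ g) {x u₀ : Fin n → ℝ} (hgrad : gradv g u₀ = x)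
    (u : Fin n → ℝ) :
    dotp x u₀ - g u₀ ≤ dotp x u - g u := by
  have h1 := concave_fderiv_le hgc hgd u₀ u
  have h2 : fderiv ℝ g u₀ (u - u₀) = dotp x (u - u₀) := by
    rw [fderiv_apply_eq_dotp, hgrad]
  have h3 := dotp_sub x u u₀
  rw [h2, h3] at h1
  linarith

lemma lfT_eq {g : (Fin n → ℝ) → ℝ} {x u₀ : Fin n → ℝ}
    (hmin : ∀ u, dotp x u₀ - g u₀ ≤ dotp x u - g u) :
    lfT g x = ((dotp x u₀ - g u₀ : ℝ) : EReal) := by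
  refine le_antisymm (iInf_le _ u₀) (le_iInf fun u => ?_)
  exact_mod_cast hmin u

lemma gradv_contDiff {g : (Fin n → ℝ) → ℝ} (hg : ContDiff ℝ (⊤ : ℕ∞) g) :
    ContDiff ℝ 1 (gradv g) := by
  have h1 : ContDiff ℝ 1 (fun u => fderiv ℝ g u) := hg.fderiv_right (WithTop.coe_le_coe.2 le_top)
  exact contDiff_pi.2 fun i =>
    (ContinuousLinearMap.apply ℝ ℝ ((Pi.single i 1 : Fin n → ℝ))).contDiff.comp h1

lemma fderiv_gradv_apply {g : (Fin n → ℝ) → ℝ} (hg : ContDiff ℝ (⊤ : ℕ∞) g)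
    (u v : Fin n → ℝ) (i : Fin n) :
    fderiv ℝ (gradv g) u v i = fderiv ℝ (fun w => gradv g w i) u v := by
  have hfd : HasFDerivAt (gradv g) (fderiv ℝ (gradv g) u) u :=
    (((gradv_contDiff hg).differentiable one_ne_zero) u).hasFDerivAt
  have hci : HasFDerivAt (fun w => gradv g w i)
      ((ContinuousLinearMap.proj i).comp (fderiv ℝ (gradv g) u)) u :=
    (ContinuousLinearMap.proj (R := ℝ) (φ := fun _ : Fin n => ℝ) i).hasFDerivAt.comp u hfd
  rw [hci.fderiv]
  rfl

lemma hess_det_eq {g : (Fin n → ℝ) → ℝ} (hg : ContDiff ℝ (⊤ : ℕ∞) g) (u : Fin n → ℝ) :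
    |(fderiv ℝ (gradv g) u).det| = |(hessM g u).det| := by
  have hmat : LinearMap.toMatrix (Pi.basisFun ℝ (Fin n)) (Pi.basisFun ℝ (Fin n))
      (↑(fderiv ℝ (gradv g) u) : (Fin n → ℝ) →ₗ[ℝ] (Fin n → ℝ)) = (hessM g u).transpose := by
    ext i j
    rw [LinearMap.toMatrix_apply]
    simp only [Pi.basisFun_apply, Pi.basisFun_repr, ContinuousLinearMap.coe_coe]
    rw [fderiv_gradv_apply hg]
    rfl
  have : (fderiv ℝ (gradv g) u).det
      = LinearMap.det (↑(fderiv ℝ (gradv g) u) : (Fin n → ℝ) →ₗ[ℝ] (Fin n → ℝ)) := rfl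
  rw [this, ← LinearMap.det_toMatrix (Pi.basisFun ℝ (Fin n)), hmat, Matrix.det_transpose]

lemma change_var {g : (Fin n → ℝ) → ℝ} (hg : ContDiff ℝ (⊤ : ℕ∞) g) {Δ : Set (Fin n → ℝ)}
    (hbij : Set.BijOn (gradv g) Set.univ (interior Δ))
    {G : (Fin n → ℝ) → (Fin n → ℝ)} (hGinv : ∀ x ∈ interior Δ, gradv g (G x) = x)
    (φ : (Fin n → ℝ) → ℝ) :
    ∫ x in interior Δ, φ (G x) = ∫ u : Fin n → ℝ, |(hessM g u).det| • φ u := by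
  have hfd : ∀ u : Fin n → ℝ, HasFDerivAt (gradv g) (fderiv ℝ (gradv g) u) u :=
    fun u => (((gradv_contDiff hg).differentiable one_ne_zero) u).hasFDerivAt
  have hGfix : ∀ u : Fin n → ℝ, G (gradv g u) = u := by
    intro u
    have hmem : gradv g u ∈ interior Δ := hbij.mapsTo (Set.mem_univ u)
    exact hbij.injOn (Set.mem_univ _) (Set.mem_univ _) (hGinv _ hmem)
  calc ∫ x in interior Δ, φ (G x)
      = ∫ x in (gradv g) '' Set.univ, φ (G x) := by rw [hbij.image_eq]
    _ = ∫ u in Set.univ, |(fderiv ℝ (gradv g) u).det| • φ (G (gradv g u)) := by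
        exact integral_image_eq_integral_abs_det_fderiv_smul volume MeasurableSet.univ
          (fun x _ => (hfd x).hasFDerivWithinAt) hbij.injOn (fun x => φ (G x))
    _ = ∫ u : Fin n → ℝ, |(hessM g u).det| • φ u := by
        rw [Measure.restrict_univ]
        congr 1
        funext u
        rw [hess_det_eq hg u, hGfix u]

end Stmt7Aux

namespace Stmt7Aux

lemma continuous_dotp_right (u : Fin n → ℝ) : Continuous fun v : Fin n → ℝ => dotp v u := by
  unfold dotp
  exact continuous_finset_sum _ fun i _ => (continuous_apply i).mul continuous_const

lemma lsf_le {Δ : Set (Fin n → ℝ)} (hΔc : IsCompact Δ) {x : Fin n → ℝ} (hx : x ∈ Δ)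
    (u : Fin n → ℝ) : lsf Δ u ≤ dotp x u := by
  apply csInf_le ((hΔc.image (continuous_dotp_right u)).bddBelow)
  exact ⟨x, hx, rfl⟩

lemma continuousOn_dotp_comp {s : Set (Fin n → ℝ)} {G : (Fin n → ℝ) → (Fin n → ℝ)}
    (hG : ContinuousOn G s) : ContinuousOn (fun x => dotp x (G x)) s := by
  have : (fun x : Fin n → ℝ => dotp x (G x)) = fun x => ∑ i, x i * G x i := rfl
  rw [this]
  apply continuousOn_finset_sum
  intro i _
  exact ((continuous_apply i).continuousOn).mul ((continuous_apply i).comp_continuousOn hG)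

end Stmt7Aux

theorem stmt7 (n : ℕ) (Δ : Set (Fin n → ℝ))
    (hΔc : IsCompact Δ) (hΔconv : Convex ℝ Δ) (hΔint : (interior Δ).Nonempty)
    (g₀ g₁ : (Fin n → ℝ) → ℝ)
    (hg₀s : ContDiff ℝ (⊤ : ℕ∞) g₀) (hg₁s : ContDiff ℝ (⊤ : ℕ∞) g₁)
    (hg₀c : StrictConcaveOn ℝ Set.univ g₀) (hg₁c : StrictConcaveOn ℝ Set.univ g₁)
    (hb₀ : ∃ C : ℝ, ∀ u, |g₀ u - lsf Δ u| ≤ C)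
    (hb₁ : ∃ C : ℝ, ∀ u, |g₁ u - lsf Δ u| ≤ C)
    -- for each t ∈ [0,1], the gradient of g_t = (1−t)g₀ + tg₁ is a smooth
    -- diffeomorphism from ℝⁿ onto the interior of Δ
    (hdiffeo : ∀ t ∈ Set.Icc (0 : ℝ) 1,
      Set.BijOn (gradv (fun u => (1 - t) * g₀ u + t * g₁ u)) Set.univ (interior Δ) ∧
      ∃ Gt : (Fin n → ℝ) → (Fin n → ℝ), ContDiffOn ℝ (⊤ : ℕ∞) Gt (interior Δ) ∧
        ∀ x ∈ interior Δ, gradv (fun u => (1 - t) * g₀ u + t * g₁ u) (Gt x) = x) :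
    ∀ s ∈ Set.Ico (0 : ℝ) 1,
      HasDerivWithinAt
        (fun t : ℝ => ∫ x in Δ, (lfT (fun u => (1 - t) * g₀ u + t * g₁ u) x).toReal)
        (-∫ u : Fin n → ℝ,
          (g₁ u - g₀ u) * |(hessM (fun v => (1 - s) * g₀ v + s * g₁ v) u).det|)
        (Set.Ici s) s := by
  intro s hs
  obtain ⟨hs0, hs1⟩ := hs
  have hs01 : s ∈ Set.Icc (0:ℝ) 1 := ⟨hs0, hs1.le⟩
  classical
  set gt : ℝ → (Fin n → ℝ) → ℝ := fun t u => (1 - t) * g₀ u + t * g₁ u with hgtdef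
  -- basic smoothness facts
  have hd0 : Differentiable ℝ g₀ := hg₀s.differentiable (by simp)
  have hd1 : Differentiable ℝ g₁ := hg₁s.differentiable (by simp)
  have hgts : ∀ t : ℝ, ContDiff ℝ (⊤ : ℕ∞) (gt t) := fun t =>
    (contDiff_const.mul hg₀s).add (contDiff_const.mul hg₁s)
  have hgtd : ∀ t : ℝ, Differentiable ℝ (gt t) := fun t => (hgts t).differentiable (by simp)
  have hgtc : ∀ t ∈ Set.Icc (0:ℝ) 1, ConcaveOn ℝ Set.univ (gt t) := by
    intro t ht
    have h0 : ConcaveOn ℝ Set.univ fun u => (1 - t) • g₀ u :=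
      hg₀c.concaveOn.smul (by linarith [ht.2])
    have h1 : ConcaveOn ℝ Set.univ fun u => t • g₁ u := hg₁c.concaveOn.smul ht.1
    have hfe : gt t = ((fun u => (1 - t) • g₀ u) + fun u => t • g₁ u) := by
      funext u; simp [hgtdef, smul_eq_mul]
    rw [hfe]
    exact h0.add h1
  -- gradient of the pencil
  have hgradt : ∀ (t : ℝ) (u : Fin n → ℝ) (i : Fin n),
      gradv (gt t) u i = (1 - t) * gradv g₀ u i + t * gradv g₁ u i := by
    intro t u i
    show fderiv ℝ (fun u => (1 - t) * g₀ u + t * g₁ u) u (Pi.single i 1) = _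
    rw [fderiv_fun_add ((hd0 u).const_mul _) ((hd1 u).const_mul _),
      fderiv_const_mul (hd0 u), fderiv_const_mul (hd1 u)]
    simp [gradv]
  have hgrad0 : ∀ u, gradv (gt 0) u = gradv g₀ u := by
    intro u; funext i; rw [hgradt]; ring
  have hgrad1 : ∀ u, gradv (gt 1) u = gradv g₁ u := by
    intro u; funext i; rw [hgradt]; ring
  -- diffeo data
  have hbij : ∀ t ∈ Set.Icc (0:ℝ) 1, Set.BijOn (gradv (gt t)) Set.univ (interior Δ) :=
    fun t ht => (hdiffeo t ht).1
  choose! G hGsm hGinv using fun t (ht : t ∈ Set.Icc (0:ℝ) 1) => (hdiffeo t ht).2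
  have hGinv' : ∀ t ∈ Set.Icc (0:ℝ) 1, ∀ x ∈ interior Δ, gradv (gt t) (G t x) = x :=
    fun t ht x hx => hGinv t ht x hx
  set ψ : ℝ → (Fin n → ℝ) → ℝ := fun t x => dotp x (G t x) - gt t (G t x) with hψdef
  -- minimality
  have hmin : ∀ t ∈ Set.Icc (0:ℝ) 1, ∀ x ∈ interior Δ, ∀ u : Fin n → ℝ,
      ψ t x ≤ dotp x u - gt t u :=
    fun t ht x hx u => Stmt7Aux.keyMin (hgtc t ht) (hgtd t) (hGinv' t ht x hx) u
  have hlfT : ∀ t ∈ Set.Icc (0:ℝ) 1, ∀ x ∈ interior Δ, (lfT (gt t) x).toReal = ψ t x := by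
    intro t ht x hx
    rw [Stmt7Aux.lfT_eq (fun u => hmin t ht x hx u), EReal.toReal_coe]
  -- bounds
  obtain ⟨C₀, hC₀⟩ := hb₀
  obtain ⟨C₁, hC₁⟩ := hb₁
  set M : ℝ := C₁ + C₀ with hMdef
  have hM : ∀ u, |g₁ u - g₀ u| ≤ M := by
    intro u
    have he : g₁ u - g₀ u = (g₁ u - lsf Δ u) - (g₀ u - lsf Δ u) := by ring
    rw [he]
    exact (abs_sub _ _).trans (add_le_add (hC₁ u) (hC₀ u))
  -- envelope inequality
  have hEnv : ∀ t ∈ Set.Icc (0:ℝ) 1, ∀ t' ∈ Set.Icc (0:ℝ) 1, ∀ x ∈ interior Δ,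
      ψ t x - ψ t' x ≤ (t' - t) * (g₁ (G t' x) - g₀ (G t' x)) := by
    intro t ht t' ht' x hx
    have h1 := hmin t ht x hx (G t' x)
    have h2 : ψ t' x = dotp x (G t' x) - gt t' (G t' x) := rfl
    have h3 : gt t' (G t' x) - gt t (G t' x) = (t' - t) * (g₁ (G t' x) - g₀ (G t' x)) := by
      simp only [hgtdef]; ring
    linarith
  -- measure facts
  have hDfin : volume Δ < ⊤ := hΔc.measure_lt_top
  have hIfin : volume (interior Δ) < ⊤ :=
    lt_of_le_of_lt (measure_mono interior_subset) hDfin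
  have hmeasI : MeasurableSet (interior Δ) := isOpen_interior.measurableSet
  have haeeq : (Δ : Set (Fin n → ℝ)) =ᵐ[volume] (interior Δ) := by
    rw [MeasureTheory.ae_eq_set]
    constructor
    · apply MeasureTheory.measure_mono_null _ (hΔconv.addHaar_frontier volume)
      intro x hx
      exact ⟨subset_closure hx.1, hx.2⟩
    · rw [Set.diff_eq_empty.2 interior_subset]
      exact measure_empty
  have hFeq : ∀ t ∈ Set.Icc (0:ℝ) 1,
      ∫ x in Δ, (lfT (gt t) x).toReal = ∫ x in interior Δ, ψ t x := by
    intro t ht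
    rw [MeasureTheory.setIntegral_congr_set haeeq]
    exact MeasureTheory.setIntegral_congr_fun hmeasI (fun x hx => hlfT t ht x hx)
  -- continuity of ψ t on interior Δ
  have hψcont : ∀ t ∈ Set.Icc (0:ℝ) 1, ContinuousOn (ψ t) (interior Δ) := by
    intro t ht
    have hGc : ContinuousOn (G t) (interior Δ) := (hGsm t ht).continuousOn
    exact (Stmt7Aux.continuousOn_dotp_comp hGc).sub
      (((hgts t).continuous).comp_continuousOn hGc)
  -- integrability of ψ t on interior Δ
  have hψbound : ∀ t ∈ Set.Icc (0:ℝ) 1, ∀ x ∈ interior Δ,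
      ‖ψ t x‖ ≤ max (max C₀ C₁) |gt t 0| := by
    intro t ht x hx
    have hxΔ : x ∈ Δ := interior_subset hx
    have hupper : ψ t x ≤ -(gt t 0) := by
      have := hmin t ht x hx 0
      have hz : dotp x (0 : Fin n → ℝ) = 0 := by simp [dotp]
      linarith
    have hlower : -(max C₀ C₁) ≤ ψ t x := by
      set u' := G t x
      have ha : g₀ u' - lsf Δ u' ≤ C₀ := (abs_le.1 (hC₀ u')).2
      have hb : g₁ u' - lsf Δ u' ≤ C₁ := (abs_le.1 (hC₁ u')).2
      have h1t : (0:ℝ) ≤ 1 - t := by linarith [ht.2]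
      have hcomb : gt t u' - lsf Δ u' ≤ max C₀ C₁ := by
        have heq : gt t u' - lsf Δ u'
            = (1 - t) * (g₀ u' - lsf Δ u') + t * (g₁ u' - lsf Δ u') := by
          simp only [hgtdef]; ring
        rw [heq]
        calc (1 - t) * (g₀ u' - lsf Δ u') + t * (g₁ u' - lsf Δ u')
            ≤ (1 - t) * max C₀ C₁ + t * max C₀ C₁ := by
              apply add_le_add
              · exact mul_le_mul_of_nonneg_left (ha.trans (le_max_left _ _)) h1t
              · exact mul_le_mul_of_nonneg_left (hb.trans (le_max_right _ _)) ht.1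
          _ = max C₀ C₁ := by ring
      have hls := Stmt7Aux.lsf_le hΔc hxΔ u'
      have : ψ t x = dotp x u' - gt t u' := rfl
      linarith
    rw [Real.norm_eq_abs, abs_le]
    refine ⟨le_trans (neg_le_neg (le_max_left (max C₀ C₁) |gt t 0|)) hlower, ?_⟩
    exact hupper.trans ((neg_le_abs _).trans (le_max_right _ _))
  have hψint : ∀ t ∈ Set.Icc (0:ℝ) 1, MeasureTheory.IntegrableOn (ψ t) (interior Δ) := by
    intro t ht
    apply MeasureTheory.Integrable.mono'
      (MeasureTheory.integrableOn_const (C := max (max C₀ C₁) |gt t 0|) hIfin.ne)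
      ((hψcont t ht).aestronglyMeasurable hmeasI)
    rw [MeasureTheory.ae_restrict_iff' hmeasI]
    exact MeasureTheory.ae_of_all _ fun x hx => hψbound t ht x hx
  -- change of variables: identify the limit value
  have hcv : ∫ x in interior Δ, (g₀ (G s x) - g₁ (G s x))
      = - ∫ u : Fin n → ℝ, (g₁ u - g₀ u) * |(hessM (gt s) u).det| := by
    rw [Stmt7Aux.change_var (hgts s) (hbij s hs01) (hGinv' s hs01) (fun w => g₀ w - g₁ w)]
    rw [← MeasureTheory.integral_neg]
    congr 1
    funext u
    simp only [smul_eq_mul]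
    ring
  -- bound on gradients
  obtain ⟨R, hR⟩ := hΔc.isBounded.exists_norm_le
  have hR0 : 0 ≤ R := by
    obtain ⟨x₀, hx₀⟩ := hΔint
    exact le_trans (norm_nonneg x₀) (hR x₀ (interior_subset hx₀))
  have hgradmem : ∀ t ∈ Set.Icc (0:ℝ) 1, ∀ u : Fin n → ℝ, gradv (gt t) u ∈ Δ :=
    fun t ht u => interior_subset ((hbij t ht).mapsTo (Set.mem_univ u))
  have hdbound : ∀ u : Fin n → ℝ, ‖gradv g₀ u - gradv g₁ u‖ ≤ 2 * R := by
    intro u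
    have h0 : ‖gradv g₀ u‖ ≤ R := by
      have := hR _ (hgradmem 0 ⟨le_rfl, zero_le_one⟩ u)
      rwa [hgrad0 u] at this
    have h1 : ‖gradv g₁ u‖ ≤ R := by
      have := hR _ (hgradmem 1 ⟨zero_le_one, le_rfl⟩ u)
      rwa [hgrad1 u] at this
    calc ‖gradv g₀ u - gradv g₁ u‖ ≤ ‖gradv g₀ u‖ + ‖gradv g₁ u‖ := norm_sub_le _ _
      _ ≤ 2 * R := by linarith
  have hshift : ∀ (t : ℝ) (u : Fin n → ℝ),
      gradv (gt s) u = gradv (gt t) u + (t - s) • (gradv g₀ u - gradv g₁ u) := by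
    intro t u
    funext i
    simp only [Pi.add_apply, Pi.smul_apply, Pi.sub_apply, smul_eq_mul, hgradt]
    ring
  -- pointwise convergence of G t x to G s x from the right
  have hptwise : ∀ x ∈ interior Δ,
      Filter.Tendsto (fun t => G t x) (nhdsWithin s (Set.Ioi s)) (nhds (G s x)) := by
    intro x hx
    obtain ⟨ε, hε, hball⟩ := Metric.isOpen_iff.1 isOpen_interior x hx
    set δ : ℝ := min (1 - s) (ε / (2 * R + 1)) with hδdef
    have h2R1 : (0:ℝ) < 2 * R + 1 := by linarith
    have hδpos : 0 < δ := lt_min (by linarith) (div_pos hε h2R1)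
    have hIoc : Set.Ioc s (s + δ) ∈ nhdsWithin s (Set.Ioi s) :=
      Ioc_mem_nhdsGT_of_mem ⟨le_rfl, by linarith⟩
    have hkey : ∀ t ∈ Set.Ioc s (s + δ), t ∈ Set.Icc (0:ℝ) 1 ∧
        gradv (gt s) (G t x) ∈ interior Δ ∧
        ‖gradv (gt s) (G t x) - x‖ ≤ 2 * R * (t - s) := by
      intro t ht
      have hδ1 : δ ≤ 1 - s := min_le_left _ _
      have ht01 : t ∈ Set.Icc (0:ℝ) 1 := ⟨by linarith [ht.1], by linarith [ht.2]⟩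
      have htpos : 0 < t - s := sub_pos.2 ht.1
      have hxeq : gradv (gt t) (G t x) = x := hGinv' t ht01 x hx
      have hnorm : ‖gradv (gt s) (G t x) - x‖ ≤ 2 * R * (t - s) := by
        rw [hshift t (G t x), hxeq, add_sub_cancel_left, norm_smul, Real.norm_eq_abs,
          abs_of_pos htpos]
        calc (t - s) * ‖gradv g₀ (G t x) - gradv g₁ (G t x)‖
            ≤ (t - s) * (2 * R) := mul_le_mul_of_nonneg_left (hdbound _) htpos.le
          _ = 2 * R * (t - s) := by ring
      have hmem : gradv (gt s) (G t x) ∈ interior Δ := by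
        apply hball
        rw [Metric.mem_ball, dist_eq_norm]
        have hle : 2 * R * (t - s) ≤ 2 * R * (ε / (2 * R + 1)) := by
          have h1 : t - s ≤ δ := by linarith [ht.2]
          have h2 : δ ≤ ε / (2 * R + 1) := min_le_right _ _
          exact mul_le_mul_of_nonneg_left (h1.trans h2) (by linarith)
        have hlt : 2 * R * (ε / (2 * R + 1)) < ε := by
          rw [← mul_div_assoc, div_lt_iff₀ h2R1]
          nlinarith
        linarith [hnorm]
      exact ⟨ht01, hmem, hnorm⟩
    have hxt : Filter.Tendsto (fun t => gradv (gt s) (G t x))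
        (nhdsWithin s (Set.Ioi s)) (nhds x) := by
      rw [← tendsto_sub_nhds_zero_iff]
      apply squeeze_zero_norm' (a := fun t => 2 * R * (t - s))
      · filter_upwards [hIoc] with t ht using (hkey t ht).2.2
      · have h : Filter.Tendsto (fun t : ℝ => 2 * R * (t - s)) (nhds s)
            (nhds (2 * R * (s - s))) :=
          (continuous_const.mul (continuous_id.sub continuous_const)).tendsto s
        simpa using h.mono_left nhdsWithin_le_nhds
    have hGsc : ContinuousAt (G s) x :=
      (hGsm s hs01).continuousOn.continuousAt (isOpen_interior.mem_nhds hx)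
    have hcomp : Filter.Tendsto (fun t => G s (gradv (gt s) (G t x)))
        (nhdsWithin s (Set.Ioi s)) (nhds (G s x)) := hGsc.tendsto.comp hxt
    apply hcomp.congr'
    filter_upwards [hIoc] with t ht
    obtain ⟨ht01, hmem, -⟩ := hkey t ht
    exact (hbij s hs01).injOn (Set.mem_univ _) (Set.mem_univ _)
      (by rw [hGinv' s hs01 _ hmem])
  have hvals : ∀ x ∈ interior Δ,
      Filter.Tendsto (fun t => g₀ (G t x) - g₁ (G t x)) (nhdsWithin s (Set.Ioi s))
        (nhds (g₀ (G s x) - g₁ (G s x))) := fun x hx =>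
    (((hg₀s.continuous).sub (hg₁s.continuous)).continuousAt.tendsto).comp (hptwise x hx)
  -- slope bounds
  have hslope_bounds : ∀ t ∈ Set.Ioc s 1, ∀ x ∈ interior Δ,
      g₀ (G t x) - g₁ (G t x) ≤ (ψ t x - ψ s x) / (t - s) ∧
      (ψ t x - ψ s x) / (t - s) ≤ g₀ (G s x) - g₁ (G s x) := by
    intro t ht x hx
    have ht01 : t ∈ Set.Icc (0:ℝ) 1 := ⟨by linarith [ht.1], ht.2⟩
    have htpos : 0 < t - s := sub_pos.2 ht.1
    have h1 := hEnv t ht01 s hs01 x hx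
    have h2 := hEnv s hs01 t ht01 x hx
    constructor
    · rw [le_div_iff₀ htpos]
      nlinarith [h2]
    · rw [div_le_iff₀ htpos]
      nlinarith [h1]
  have hptlim : ∀ x ∈ interior Δ,
      Filter.Tendsto (fun t => (ψ t x - ψ s x) / (t - s)) (nhdsWithin s (Set.Ioi s))
        (nhds (g₀ (G s x) - g₁ (G s x))) := by
    intro x hx
    have hIoc1 : Set.Ioc s 1 ∈ nhdsWithin s (Set.Ioi s) :=
      Ioc_mem_nhdsGT_of_mem ⟨le_rfl, hs1⟩
    apply tendsto_of_tendsto_of_tendsto_of_le_of_le' (hvals x hx) tendsto_const_nhds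
    · filter_upwards [hIoc1] with t ht using (hslope_bounds t ht x hx).1
    · filter_upwards [hIoc1] with t ht using (hslope_bounds t ht x hx).2
  -- uniform bound on slopes
  have hbound : ∀ t ∈ Set.Ioc s 1, ∀ x ∈ interior Δ,
      ‖(ψ t x - ψ s x) / (t - s)‖ ≤ M := by
    intro t ht x hx
    have hMt := abs_le.1 (hM (G t x))
    have hMs := abs_le.1 (hM (G s x))
    rw [Real.norm_eq_abs, abs_le]
    constructor
    · linarith [(hslope_bounds t ht x hx).1]
    · linarith [(hslope_bounds t ht x hx).2]
  have hIoc1 : Set.Ioc s 1 ∈ nhdsWithin s (Set.Ioi s) :=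
    Ioc_mem_nhdsGT_of_mem ⟨le_rfl, hs1⟩
  -- dominated convergence
  have hDC : Filter.Tendsto (fun t => ∫ x in interior Δ, (ψ t x - ψ s x) / (t - s))
      (nhdsWithin s (Set.Ioi s))
      (nhds (∫ x in interior Δ, (g₀ (G s x) - g₁ (G s x)))) := by
    apply MeasureTheory.tendsto_integral_filter_of_dominated_convergence (fun _ => M)
    · filter_upwards [hIoc1] with t ht
      have ht01 : t ∈ Set.Icc (0:ℝ) 1 := ⟨by linarith [ht.1], ht.2⟩
      exact (((hψcont t ht01).sub (hψcont s hs01)).div_const _).aestronglyMeasurable hmeasI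
    · filter_upwards [hIoc1] with t ht
      rw [MeasureTheory.ae_restrict_iff' hmeasI]
      exact MeasureTheory.ae_of_all _ fun x hx => hbound t ht x hx
    · exact MeasureTheory.integrableOn_const hIfin.ne
    · rw [MeasureTheory.ae_restrict_iff' hmeasI]
      exact MeasureTheory.ae_of_all _ fun x hx => hptlim x hx
  -- conclude
  show HasDerivWithinAt (fun t : ℝ => ∫ x in Δ, (lfT (gt t) x).toReal)
    (-∫ u : Fin n → ℝ, (g₁ u - g₀ u) * |(hessM (gt s) u).det|) (Set.Ici s) s
  rw [hasDerivWithinAt_iff_tendsto_slope, Set.Ici_sdiff_left, ← hcv]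
  apply hDC.congr'
  filter_upwards [hIoc1] with t ht
  have ht01 : t ∈ Set.Icc (0:ℝ) 1 := ⟨by linarith [ht.1], ht.2⟩
  rw [MeasureTheory.integral_div, MeasureTheory.integral_sub (hψint t ht01) (hψint s hs01),
    slope_def_field, hFeq t ht01, hFeq s hs01]
end

section
/- Let Δ ⊆ ℝⁿ be a compact convex set with nonempty interior and lower support function g_Δ(u) = min_{v ∈ Δ} ⟨v, u⟩. Let g_0, g_1 : ℝⁿ → ℝ be smooth strictly concave functions such that g_0 − g_Δ and g_1 − g_Δ are bounded on ℝⁿ, and such that for each t ∈ [0,1] the gradient map ∇g_t of g_t := (1−t) g_0 + t g_1 is a smooth diffeomorphism from ℝⁿ onto the interior of Δ. Then ∫_Δ (ǧ_1(x) − ǧ_0(x)) dx = −∫_0^1 ( ∫_{ℝⁿ} (g_1 − g_0)(u) · |det Hess g_t(u)| du ) dt. -/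
open MeasureTheory

/- ### Auxiliary lemmas -/

/-- A convex function with vanishing derivative at a point attains its minimum there. -/
lemma aux_convex_min {n : ℕ} {h : (Fin n → ℝ) → ℝ}
    (hc : ConvexOn ℝ Set.univ h) {u₀ : Fin n → ℝ}
    (hd : HasFDerivAt h (0 : (Fin n → ℝ) →L[ℝ] ℝ) u₀) (u : Fin n → ℝ) :
    h u₀ ≤ h u := by
  set φ : ℝ → ℝ := fun s => h (u₀ + s • (u - u₀)) with hφ
  have hline : HasDerivAt (fun s : ℝ => u₀ + s • (u - u₀)) (u - u₀) 0 := by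
    simpa using ((hasDerivAt_id (0:ℝ)).smul_const (u - u₀)).const_add u₀
  have hder : HasDerivAt φ 0 0 := by
    have hd' : HasFDerivAt h (0 : (Fin n → ℝ) →L[ℝ] ℝ) (u₀ + (0:ℝ) • (u - u₀)) := by
      simpa using hd
    have := hd'.comp_hasDerivAt 0 hline
    exact (by simpa using this : HasDerivAt (h ∘ fun s : ℝ => u₀ + s • (u - u₀)) 0 0)
  have hconv : ∀ s ∈ Set.Ioo (0:ℝ) 1, φ s ≤ φ 0 + s * (φ 1 - φ 0) := by
    intro s hs
    have h2 := hc.2 (Set.mem_univ (u₀ + (1:ℝ) • (u - u₀))) (Set.mem_univ (u₀ + (0:ℝ) • (u - u₀)))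
      hs.1.le (by linarith [hs.2] : (0:ℝ) ≤ 1 - s) (by ring)
    have heq : s • (u₀ + (1:ℝ) • (u - u₀)) + (1 - s) • (u₀ + (0:ℝ) • (u - u₀))
        = u₀ + s • (u - u₀) := by
      simp only [one_smul, zero_smul, add_zero]
      module
    rw [heq] at h2
    have : φ s ≤ s * φ 1 + (1 - s) * φ 0 := by simpa [hφ, smul_eq_mul] using h2
    linarith
  have hslope : Filter.Tendsto (slope φ 0) (nhdsWithin 0 (Set.Ioi 0)) (nhds 0) :=
    (hasDerivAt_iff_tendsto_slope.1 hder).mono_left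
      (nhdsWithin_mono _ (fun x hx => ne_of_gt hx))
  have hub : ∀ᶠ s in nhdsWithin (0:ℝ) (Set.Ioi 0), slope φ 0 s ≤ φ 1 - φ 0 := by
    filter_upwards [Ioo_mem_nhdsGT_of_mem (by constructor <;> norm_num : (0:ℝ) ∈ Set.Ico 0 1)]
      with s hs
    have h1 := hconv s hs
    rw [slope_def_field, sub_zero, div_le_iff₀ hs.1]
    nlinarith [hs.1]
  have hfin : (0:ℝ) ≤ φ 1 - φ 0 :=
    le_of_tendsto hslope hub
  have e0 : φ 0 = h u₀ := by simp [hφ]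
  have e1 : φ 1 = h u := by simp [hφ]
  rw [e0, e1] at hfin; linarith

/-- Riemann-sum squeeze: a function with an explicit supergradient `M` at every point of `[0,1]`
satisfies the fundamental theorem of calculus against `M`. -/
lemma aux_squeeze (Φ M : ℝ → ℝ)
    (hkey : ∀ s ∈ Set.Icc (0:ℝ) 1, ∀ t ∈ Set.Icc (0:ℝ) 1, Φ s ≤ Φ t + (s - t) * M t) :
    Φ 1 - Φ 0 = ∫ t in (0:ℝ)..1, M t := by
  have hanti : AntitoneOn M (Set.Icc 0 1) := by
    intro t ht s hs hts
    rcases eq_or_lt_of_le hts with rfl | hlt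
    · exact le_refl _
    · have h1 := hkey s hs t ht
      have h2 := hkey t ht s hs
      nlinarith
  have hInt : IntervalIntegrable M volume 0 1 := by
    apply AntitoneOn.intervalIntegrable
    rwa [Set.uIcc_of_le (zero_le_one)]
  set D : ℝ := Φ 1 - Φ 0 - ∫ t in (0:ℝ)..1, M t with hD
  have key : ∀ N : ℕ, 0 < N → |D| ≤ (M 0 - M 1) / N := by
    intro N hN
    have hNR : (0:ℝ) < N := Nat.cast_pos.2 hN
    set a : ℕ → ℝ := fun i => i / N with ha
    have amem : ∀ i, i ≤ N → a i ∈ Set.Icc (0:ℝ) 1 := by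
      intro i hi
      constructor
      · positivity
      · rw [div_le_one hNR]; exact_mod_cast hi
    have astep : ∀ i : ℕ, a (i+1) - a i = 1 / N := by
      intro i; simp only [ha]; push_cast; ring
    have amono : ∀ i : ℕ, a i ≤ a (i+1) := by
      intro i; have : (0:ℝ) < 1/N := by positivity
      linarith [astep i]
    have hintpiece : ∀ k, k < N → IntervalIntegrable M volume (a k) (a (k+1)) := by
      intro k hk
      apply hInt.mono_set
      rw [Set.uIcc_of_le (amono k), Set.uIcc_of_le zero_le_one]
      exact Set.Icc_subset_Icc (amem k (le_of_lt hk)).1 (amem (k+1) hk).2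
    have aN : a N = 1 := by simp only [ha]; exact div_self hNR.ne'
    have a0 : a 0 = 0 := by simp [ha]
    have tele : Φ 1 - Φ 0 = ∑ i ∈ Finset.range N, (Φ (a (i+1)) - Φ (a i)) := by
      rw [Finset.sum_range_sub (fun i => Φ (a i)) N, aN, a0]
    have sumint : (∫ t in (0:ℝ)..1, M t) = ∑ i ∈ Finset.range N, ∫ t in (a i)..(a (i+1)), M t := by
      rw [intervalIntegral.sum_integral_adjacent_intervals hintpiece, a0, aN]
    have up : ∀ i, i < N → Φ (a (i+1)) - Φ (a i) ≤ (1/N) * M (a i) := by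
      intro i hi
      have := hkey (a (i+1)) (amem _ hi) (a i) (amem _ (le_of_lt hi))
      rw [astep i] at this; linarith
    have lo : ∀ i, i < N → (1/N) * M (a (i+1)) ≤ Φ (a (i+1)) - Φ (a i) := by
      intro i hi
      have := hkey (a i) (amem _ (le_of_lt hi)) (a (i+1)) (amem _ hi)
      have h2 : a i - a (i+1) = -(1/N) := by linarith [astep i]
      rw [h2] at this; linarith
    have int_up : ∀ i, i < N → (∫ t in (a i)..(a (i+1)), M t) ≤ (1/N) * M (a i) := by
      intro i hi
      have h1 : (∫ t in (a i)..(a (i+1)), M t) ≤ ∫ t in (a i)..(a (i+1)), M (a i) := by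
        apply intervalIntegral.integral_mono_on (amono i) (hintpiece i hi)
          intervalIntegrable_const
        intro x hx
        exact hanti (amem _ (le_of_lt hi)) (Set.mem_Icc.2 ⟨le_trans (amem _ (le_of_lt hi)).1 hx.1,
          le_trans hx.2 (amem _ hi).2⟩) hx.1
      rw [intervalIntegral.integral_const, smul_eq_mul, astep i] at h1
      exact h1
    have int_lo : ∀ i, i < N → (1/N) * M (a (i+1)) ≤ ∫ t in (a i)..(a (i+1)), M t := by
      intro i hi
      have h1 : (∫ t in (a i)..(a (i+1)), M (a (i+1))) ≤ ∫ t in (a i)..(a (i+1)), M t := by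
        apply intervalIntegral.integral_mono_on (amono i) intervalIntegrable_const
          (hintpiece i hi)
        intro x hx
        exact hanti (Set.mem_Icc.2 ⟨le_trans (amem _ (le_of_lt hi)).1 hx.1,
          le_trans hx.2 (amem _ hi).2⟩) (amem _ hi) hx.2
      rw [intervalIntegral.integral_const, smul_eq_mul, astep i] at h1
      exact h1
    have teleM : ∑ i ∈ Finset.range N, ((1/(N:ℝ)) * M (a i) - (1/N) * M (a (i+1)))
        = (M 0 - M 1) / N := by
      have := Finset.sum_range_sub' (fun i => (1/(N:ℝ)) * M (a i)) N
      rw [this, a0, aN]; ring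
    have hup : D ≤ (M 0 - M 1) / N := by
      have h1 : Φ 1 - Φ 0 ≤ ∑ i ∈ Finset.range N, (1/(N:ℝ)) * M (a i) := by
        rw [tele]; exact Finset.sum_le_sum (fun i hi => up i (Finset.mem_range.1 hi))
      have h2 : ∑ i ∈ Finset.range N, (1/(N:ℝ)) * M (a (i+1)) ≤ ∫ t in (0:ℝ)..1, M t := by
        rw [sumint]; exact Finset.sum_le_sum (fun i hi => int_lo i (Finset.mem_range.1 hi))
      have h3 : D ≤ ∑ i ∈ Finset.range N, ((1/(N:ℝ)) * M (a i) - (1/N) * M (a (i+1))) := by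
        rw [Finset.sum_sub_distrib]; rw [hD]; linarith
      linarith [teleM ▸ h3]
    have hdn : -((M 0 - M 1) / N) ≤ D := by
      have h1 : ∑ i ∈ Finset.range N, (1/(N:ℝ)) * M (a (i+1)) ≤ Φ 1 - Φ 0 := by
        rw [tele]; exact Finset.sum_le_sum (fun i hi => lo i (Finset.mem_range.1 hi))
      have h2 : (∫ t in (0:ℝ)..1, M t) ≤ ∑ i ∈ Finset.range N, (1/(N:ℝ)) * M (a i) := by
        rw [sumint]; exact Finset.sum_le_sum (fun i hi => int_up i (Finset.mem_range.1 hi))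
      have h3 : -D ≤ ∑ i ∈ Finset.range N, ((1/(N:ℝ)) * M (a i) - (1/N) * M (a (i+1))) := by
        rw [Finset.sum_sub_distrib]; rw [hD]; linarith
      rw [teleM] at h3; linarith
    rw [abs_le]; exact ⟨hdn, hup⟩
  have hlim : Filter.Tendsto (fun N : ℕ => (M 0 - M 1) / N) Filter.atTop (nhds 0) :=
    tendsto_const_div_atTop_nhds_zero_nat _
  have habs : |D| ≤ 0 := by
    apply ge_of_tendsto hlim
    filter_upwards [Filter.eventually_gt_atTop 0] with N hN
    exact key N hN
  have : D = 0 := abs_eq_zero.1 (le_antisymm habs (abs_nonneg _))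
  rw [hD] at this; linarith

lemma clm_apply_eq_sum {n : ℕ} (L : (Fin n → ℝ) →L[ℝ] ℝ) (w : Fin n → ℝ) :
    L w = ∑ i, w i * L (Pi.single i 1) := by
  have hw : w = ∑ i, (w i) • (Pi.single i (1:ℝ) : Fin n → ℝ) := by
    have h1 : ∀ i : Fin n, (w i) • (Pi.single i (1:ℝ) : Fin n → ℝ) = Pi.single i (w i) := by
      intro i; rw [← Pi.single_smul, smul_eq_mul, mul_one]
    simp_rw [h1]
    exact (Finset.univ_sum_single w).symm
  conv_lhs => rw [hw]
  rw [map_sum]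
  congr 1; funext i
  rw [L.map_smul, smul_eq_mul]

noncomputable def dotCLM {n : ℕ} (x : Fin n → ℝ) : (Fin n → ℝ) →L[ℝ] ℝ :=
  ∑ i, x i • (ContinuousLinearMap.proj i : (Fin n → ℝ) →L[ℝ] ℝ)

lemma dotCLM_apply {n : ℕ} (x u : Fin n → ℝ) : dotCLM x u = dotp x u := by
  simp [dotCLM, dotp, ContinuousLinearMap.sum_apply]

lemma aux_hasFDeriv_gradv {n : ℕ} {g : (Fin n → ℝ) → ℝ} (hg : ContDiff ℝ (⊤ : ℕ∞) g) (u : Fin n → ℝ) :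
    HasFDerivAt (gradv g)
      (LinearMap.toContinuousLinearMap (Matrix.toLin' (hessM g u).transpose)) u := by
  have hfd : ContDiff ℝ (⊤ : ℕ∞) (fderiv ℝ g) := hg.fderiv_right (by simp)
  set D := fderiv ℝ (fderiv ℝ g) u with hDdef
  have hD : HasFDerivAt (fderiv ℝ g) D u := ((hfd.differentiable (by simp)) u).hasFDerivAt
  set Φ : ((Fin n → ℝ) →L[ℝ] ℝ) →L[ℝ] (Fin n → ℝ) :=
    ContinuousLinearMap.pi (fun i : Fin n => ContinuousLinearMap.apply ℝ ℝ (Pi.single i (1:ℝ)))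
    with hΦdef
  have hgr : gradv g = fun v => Φ (fderiv ℝ g v) := by
    funext v; funext i; rfl
  have hcomp : HasFDerivAt (gradv g) (Φ.comp D) u := by
    rw [hgr]; exact Φ.hasFDerivAt.comp u hD
  have hMij : ∀ i j, hessM g u i j = (D (Pi.single i 1)) (Pi.single j 1) := by
    intro i j
    have happ : HasFDerivAt (fun v => (fderiv ℝ g v) (Pi.single j 1))
        ((ContinuousLinearMap.apply ℝ ℝ (Pi.single j (1:ℝ))).comp D) u := by
      simpa [Function.comp_def] using
        (ContinuousLinearMap.apply ℝ ℝ (Pi.single j (1:ℝ))).hasFDerivAt.comp u hD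
    have := happ.fderiv
    simp only [hessM, Matrix.of_apply]
    rw [this]
    rfl
  have heq : Φ.comp D = LinearMap.toContinuousLinearMap (Matrix.toLin' (hessM g u).transpose) := by
    apply ContinuousLinearMap.ext
    intro w
    funext j
    have lhs : (Φ.comp D) w j = (D w) (Pi.single j 1) := rfl
    rw [lhs]
    have rhs : (LinearMap.toContinuousLinearMap (Matrix.toLin' (hessM g u).transpose)) w j
        = ∑ i, hessM g u i j * w i := by
      simp [Matrix.toLin'_apply, Matrix.mulVec, dotProduct, Matrix.transpose_apply]
    rw [rhs]
    have hw : w = ∑ i, (w i) • (Pi.single i (1:ℝ) : Fin n → ℝ) := by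
      have h1 : ∀ i : Fin n, (w i) • (Pi.single i (1:ℝ) : Fin n → ℝ) = Pi.single i (w i) := by
        intro i; rw [← Pi.single_smul, smul_eq_mul, mul_one]
      simp_rw [h1]
      exact (Finset.univ_sum_single w).symm
    conv_lhs => rw [hw]
    rw [map_sum, ContinuousLinearMap.sum_apply]
    apply Finset.sum_congr rfl
    intro i _
    rw [D.map_smul, ContinuousLinearMap.smul_apply, smul_eq_mul, hMij i j]
    ring
  rw [← heq]; exact hcomp

theorem stmt8 (n : ℕ) (Δ : Set (Fin n → ℝ))
    (hΔc : IsCompact Δ) (hΔconv : Convex ℝ Δ) (hΔint : (interior Δ).Nonempty)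
    (g₀ g₁ : (Fin n → ℝ) → ℝ)
    (hg₀s : ContDiff ℝ (⊤ : ℕ∞) g₀) (hg₁s : ContDiff ℝ (⊤ : ℕ∞) g₁)
    (hg₀c : StrictConcaveOn ℝ Set.univ g₀) (hg₁c : StrictConcaveOn ℝ Set.univ g₁)
    (hb₀ : ∃ C : ℝ, ∀ u, |g₀ u - lsf Δ u| ≤ C)
    (hb₁ : ∃ C : ℝ, ∀ u, |g₁ u - lsf Δ u| ≤ C)
    -- for each t ∈ [0,1], the gradient of g_t = (1−t)g₀ + tg₁ is a smooth
    -- diffeomorphism from ℝⁿ onto the interior of Δ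
    (hdiffeo : ∀ t ∈ Set.Icc (0 : ℝ) 1,
      Set.BijOn (gradv (fun u => (1 - t) * g₀ u + t * g₁ u)) Set.univ (interior Δ) ∧
      ∃ Gt : (Fin n → ℝ) → (Fin n → ℝ), ContDiffOn ℝ (⊤ : ℕ∞) Gt (interior Δ) ∧
        ∀ x ∈ interior Δ, gradv (fun u => (1 - t) * g₀ u + t * g₁ u) (Gt x) = x) :
    ∫ x in Δ, ((lfT g₁ x).toReal - (lfT g₀ x).toReal) =
      -∫ t in (0:ℝ)..1, ∫ u : Fin n → ℝ,
        (g₁ u - g₀ u) * |(hessM (fun v => (1 - t) * g₀ v + t * g₁ v) u).det| := by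
  classical
  obtain ⟨C₀, hC₀⟩ := hb₀
  obtain ⟨C₁, hC₁⟩ := hb₁
  have hC₀nn : 0 ≤ C₀ := le_trans (abs_nonneg _) (hC₀ 0)
  have hC₁nn : 0 ≤ C₁ := le_trans (abs_nonneg _) (hC₁ 0)
  set gt : ℝ → (Fin n → ℝ) → ℝ := fun t u => (1 - t) * g₀ u + t * g₁ u with hgt
  set d : (Fin n → ℝ) → ℝ := fun u => g₁ u - g₀ u with hdd
  -- the inverse gradient maps
  have hG' : ∀ t : Set.Icc (0:ℝ) 1, ∃ Gt, ContDiffOn ℝ (⊤ : ℕ∞) Gt (interior Δ) ∧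
      ∀ x ∈ interior Δ, gradv (gt ↑t) (Gt x) = x := fun t => (hdiffeo ↑t t.2).2
  choose G hGsm hGinv using hG'
  have hbij : ∀ t : Set.Icc (0:ℝ) 1, Set.BijOn (gradv (gt ↑t)) Set.univ (interior Δ) :=
    fun t => (hdiffeo ↑t t.2).1
  -- smoothness and concavity of gt
  have hgs : ∀ t : ℝ, ContDiff ℝ (⊤ : ℕ∞) (gt t) :=
    fun t => (contDiff_const.mul hg₀s).add (contDiff_const.mul hg₁s)
  have hconc : ∀ t : Set.Icc (0:ℝ) 1, ConcaveOn ℝ Set.univ (gt ↑t) := by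
    intro t
    have h1 : ConcaveOn ℝ Set.univ (fun u => (1 - (t:ℝ)) • g₀ u) :=
      hg₀c.concaveOn.smul (by linarith [t.2.2])
    have h2 : ConcaveOn ℝ Set.univ (fun u => (t:ℝ) • g₁ u) :=
      hg₁c.concaveOn.smul t.2.1
    have := h1.add h2
    simp only [smul_eq_mul] at this
    exact this
  -- `lsf` is a lower bound of `dotp x ·` for `x ∈ Δ`
  have hlsf_le : ∀ (u : Fin n → ℝ), ∀ x ∈ Δ, lsf Δ u ≤ dotp x u := by
    intro u x hx
    apply csInf_le
    · have hcont : Continuous (fun v : Fin n → ℝ => dotp v u) := by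
        apply continuous_finset_sum
        intro i _
        exact (continuous_apply i).mul continuous_const
      exact (hΔc.image hcont).bddBelow
    · exact ⟨x, hx, rfl⟩
  -- bound on gt - lsf
  have hgtb : ∀ t : Set.Icc (0:ℝ) 1, ∀ u, |gt ↑t u - lsf Δ u| ≤ C₀ + C₁ := by
    intro t u
    have e : gt ↑t u - lsf Δ u = (1 - (t:ℝ))*(g₀ u - lsf Δ u) + (t:ℝ)*(g₁ u - lsf Δ u) := by
      simp only [hgt]; ring
    rw [e]
    have h0 := abs_le.1 (hC₀ u)
    have h1 := abs_le.1 (hC₁ u)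
    have ht0 := t.2.1
    have ht1 := t.2.2
    rw [abs_le]
    constructor <;> nlinarith
  -- bound on d
  have hdb : ∀ u, |d u| ≤ C₀ + C₁ := by
    intro u
    have e : d u = (g₁ u - lsf Δ u) - (g₀ u - lsf Δ u) := by simp only [hdd]; ring
    rw [e]
    have h0 := abs_le.1 (hC₀ u)
    have h1 := abs_le.1 (hC₁ u)
    rw [abs_le]
    constructor <;> linarith
  -- the value function
  set vfun : Set.Icc (0:ℝ) 1 → (Fin n → ℝ) → ℝ :=
    fun t x => dotp x (G t x) - gt ↑t (G t x) with hvfun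
  -- minimality
  have hmin : ∀ (t : Set.Icc (0:ℝ) 1) (x : Fin n → ℝ), x ∈ interior Δ →
      ∀ u : Fin n → ℝ, vfun t x ≤ dotp x u - gt ↑t u := by
    intro t x hx u
    have hgrad : gradv (gt ↑t) (G t x) = x := hGinv t x hx
    have hfd_gt : HasFDerivAt (gt ↑t) (fderiv ℝ (gt ↑t) (G t x)) (G t x) :=
      (((hgs ↑t).differentiable (by simp)) (G t x)).hasFDerivAt
    have hfgt : fderiv ℝ (gt ↑t) (G t x) = dotCLM x := by
      apply ContinuousLinearMap.ext
      intro w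
      rw [clm_apply_eq_sum (fderiv ℝ (gt ↑t) (G t x)) w, dotCLM_apply, dotp]
      apply Finset.sum_congr rfl
      intro i _
      have : fderiv ℝ (gt ↑t) (G t x) (Pi.single i 1) = x i := congrFun hgrad i
      rw [this]; ring
    have hdotp : HasFDerivAt (fun u => dotp x u) (dotCLM x) (G t x) := by
      have he : (fun u : Fin n → ℝ => dotp x u) = ⇑(dotCLM x) := by
        funext u'; rw [dotCLM_apply]
      rw [he]; exact (dotCLM x).hasFDerivAt
    have h0 : HasFDerivAt (fun u => dotp x u - gt ↑t u)
        (0 : (Fin n → ℝ) →L[ℝ] ℝ) (G t x) := by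
      have := hdotp.sub (hfgt ▸ hfd_gt)
      exact (by simpa using this : HasFDerivAt ((fun u => dotp x u) - gt ↑t) 0 (G t x))
    have hconv : ConvexOn ℝ Set.univ (fun u => dotp x u - gt ↑t u) := by
      have h2 : ConvexOn ℝ Set.univ (fun u : Fin n → ℝ => dotp x u) := by
        constructor
        · exact convex_univ
        · intro a _ b _ p q hp hq hpq
          apply le_of_eq
          simp only [dotp, smul_eq_mul, Pi.add_apply, Pi.smul_apply, mul_add,
            Finset.sum_add_distrib, Finset.mul_sum]
          congr 1 <;> (apply Finset.sum_congr rfl; intro i _; ring)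
      exact h2.sub (hconc t)
    exact aux_convex_min hconv h0 u
  -- lfT value on the interior
  have hlfT : ∀ (t : Set.Icc (0:ℝ) 1) (x : Fin n → ℝ), x ∈ interior Δ →
      (lfT (gt ↑t) x).toReal = vfun t x := by
    intro t x hx
    have : lfT (gt ↑t) x = ((vfun t x : ℝ) : EReal) := by
      apply le_antisymm
      · exact iInf_le _ (G t x)
      · apply le_iInf
        intro u
        exact_mod_cast hmin t x hx u
    rw [this, EReal.toReal_coe]
  -- bound on the value function
  set K : ℝ := C₀ + C₁ + |g₀ 0| + |g₁ 0| with hK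
  have hvb : ∀ (t : Set.Icc (0:ℝ) 1) (x : Fin n → ℝ), x ∈ interior Δ → |vfun t x| ≤ K := by
    intro t x hx
    have hup : vfun t x ≤ |g₀ 0| + |g₁ 0| := by
      have h1 := hmin t x hx 0
      have h2 : dotp x 0 = 0 := by simp [dotp]
      rw [h2] at h1
      have ht0 := t.2.1
      have ht1 := t.2.2
      have h3 : -gt ↑t 0 ≤ |g₀ 0| + |g₁ 0| := by
        simp only [hgt]
        nlinarith [le_abs_self (g₀ 0), neg_abs_le (g₀ 0), le_abs_self (g₁ 0), neg_abs_le (g₁ 0)]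
      linarith
    have hlo : -(C₀ + C₁) ≤ vfun t x := by
      have h1 : lsf Δ (G t x) ≤ dotp x (G t x) := hlsf_le (G t x) x (interior_subset hx)
      have h2 := abs_le.1 (hgtb t (G t x))
      simp only [hvfun]
      linarith
    rw [abs_le, hK]
    constructor
    · linarith [abs_nonneg (g₀ 0), abs_nonneg (g₁ 0)]
    · linarith [hC₀nn, hC₁nn]
  -- measure-theoretic facts
  have hfront : volume (frontier Δ) = 0 := hΔconv.addHaar_frontier volume
  have haeq : (interior Δ : Set (Fin n → ℝ)) =ᵐ[volume] Δ := by
    rw [MeasureTheory.ae_eq_set]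
    constructor
    · rw [Set.diff_eq_empty.2 interior_subset]; exact measure_empty
    · apply measure_mono_null _ hfront
      intro y hy
      exact ⟨subset_closure hy.1, hy.2⟩
  have hfinmeas : volume (interior Δ) < ⊤ :=
    lt_of_le_of_lt (measure_mono interior_subset) hΔc.measure_lt_top
  have hmeas : MeasurableSet (interior Δ) := isOpen_interior.measurableSet
  -- integrability
  have hconstInt : ∀ c : ℝ, IntegrableOn (fun _ : Fin n → ℝ => c) (interior Δ) volume :=
    fun c => integrableOn_const hfinmeas.ne
  have hGcont : ∀ t : Set.Icc (0:ℝ) 1, ContinuousOn (G t) (interior Δ) :=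
    fun t => (hGsm t).continuousOn
  have hvcont : ∀ t : Set.Icc (0:ℝ) 1, ContinuousOn (vfun t) (interior Δ) := by
    intro t
    apply ContinuousOn.sub
    · apply continuousOn_finset_sum
      intro i _
      exact (continuous_apply i).continuousOn.mul
        ((continuous_apply i).comp_continuousOn (hGcont t))
    · exact (hgs ↑t).continuous.comp_continuousOn (hGcont t)
  have hdcont : ∀ t : Set.Icc (0:ℝ) 1, ContinuousOn (fun x => d (G t x)) (interior Δ) := by
    intro t
    exact (hg₁s.continuous.sub hg₀s.continuous).comp_continuousOn (hGcont t)
  have hIv : ∀ t : Set.Icc (0:ℝ) 1, IntegrableOn (vfun t) (interior Δ) volume := by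
    intro t
    apply Integrable.mono' (hconstInt K) ((hvcont t).aestronglyMeasurable hmeas)
    apply (ae_restrict_iff' hmeas).2
    exact Filter.Eventually.of_forall (fun x hx => by
      rw [Real.norm_eq_abs]; exact hvb t x hx)
  have hId : ∀ t : Set.Icc (0:ℝ) 1, IntegrableOn (fun x => d (G t x)) (interior Δ) volume := by
    intro t
    apply Integrable.mono' (hconstInt (C₀ + C₁)) ((hdcont t).aestronglyMeasurable hmeas)
    apply (ae_restrict_iff' hmeas).2
    exact Filter.Eventually.of_forall (fun x hx => by
      rw [Real.norm_eq_abs]; exact hdb (G t x))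
  -- the potentials Φ and M
  set Φ : ℝ → ℝ := fun t =>
    if ht : t ∈ Set.Icc (0:ℝ) 1 then ∫ x in interior Δ, vfun ⟨t, ht⟩ x else 0 with hΦdef
  set M : ℝ → ℝ := fun t =>
    if ht : t ∈ Set.Icc (0:ℝ) 1 then ∫ x in interior Δ, -(d (G ⟨t, ht⟩ x)) else 0 with hMdef
  -- the key concavity inequality
  have hkey : ∀ s ∈ Set.Icc (0:ℝ) 1, ∀ t ∈ Set.Icc (0:ℝ) 1, Φ s ≤ Φ t + (s - t) * M t := by
    intro s hs t ht
    simp only [hΦdef, hMdef, dif_pos hs, dif_pos ht]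
    set ts : Set.Icc (0:ℝ) 1 := ⟨s, hs⟩
    set tt : Set.Icc (0:ℝ) 1 := ⟨t, ht⟩
    have hpoint : ∀ x ∈ interior Δ,
        vfun ts x ≤ vfun tt x + (s - t) * (-(d (G tt x))) := by
      intro x hx
      have h1 := hmin ts x hx (G tt x)
      have h2 : dotp x (G tt x) - gt s (G tt x)
          = vfun tt x + (s - t) * (-(d (G tt x))) := by
        simp only [hvfun, hgt, hdd]; ring
      calc vfun ts x ≤ dotp x (G tt x) - gt s (G tt x) := h1
        _ = vfun tt x + (s - t) * (-(d (G tt x))) := h2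
    have hI2 : IntegrableOn (fun x => (s - t) * (-(d (G tt x)))) (interior Δ) volume := by
      have h := (hId tt).const_mul (s - t)
      have he : (fun x => (s - t) * (-(d (G tt x)))) = (fun x => -((s - t) * d (G tt x))) := by
        funext x; ring
      rw [he]
      exact h.neg
    have hIrhs : IntegrableOn
        (fun x => vfun tt x + (s - t) * (-(d (G tt x)))) (interior Δ) volume :=
      (hIv tt).add hI2
    have hle := setIntegral_mono_on (hIv ts) hIrhs hmeas hpoint
    have heq2 : ∫ x in interior Δ, (vfun tt x + (s - t) * (-(d (G tt x))))
        = (∫ x in interior Δ, vfun tt x) + (s - t) * ∫ x in interior Δ, -(d (G tt x)) := by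
      rw [integral_add (hIv tt) hI2, integral_const_mul]
    rw [heq2] at hle
    exact hle
  -- apply the squeeze
  have hsq := aux_squeeze Φ M hkey
  -- identify the LHS
  have hmem0 : (0:ℝ) ∈ Set.Icc (0:ℝ) 1 := by norm_num
  have hmem1 : (1:ℝ) ∈ Set.Icc (0:ℝ) 1 := by norm_num
  have hgt0 : gt 0 = g₀ := by funext u; simp [hgt]
  have hgt1 : gt 1 = g₁ := by funext u; simp [hgt]
  have hLHS : (∫ x in Δ, ((lfT g₁ x).toReal - (lfT g₀ x).toReal)) = Φ 1 - Φ 0 := by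
    rw [← setIntegral_congr_set haeq]
    have heq3 : ∀ x ∈ interior Δ, ((lfT g₁ x).toReal - (lfT g₀ x).toReal)
        = vfun ⟨1, hmem1⟩ x - vfun ⟨0, hmem0⟩ x := by
      intro x hx
      rw [← hgt0, ← hgt1, hlfT ⟨1, hmem1⟩ x hx, hlfT ⟨0, hmem0⟩ x hx]
    rw [setIntegral_congr_fun hmeas heq3,
      integral_sub (hIv ⟨1, hmem1⟩) (hIv ⟨0, hmem0⟩)]
    simp only [hΦdef, dif_pos hmem1, dif_pos hmem0]
  -- identify the RHS via change of variables
  have hcov : ∀ t : Set.Icc (0:ℝ) 1,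
      (∫ u : Fin n → ℝ, (g₁ u - g₀ u) * |(hessM (gt ↑t) u).det|)
        = ∫ x in interior Δ, d (G t x) := by
    intro t
    have hbijt := hbij t
    have himg : gradv (gt ↑t) '' Set.univ = interior Δ := hbijt.image_eq
    have hfd : ∀ u ∈ (Set.univ : Set (Fin n → ℝ)), HasFDerivWithinAt (gradv (gt ↑t))
        (LinearMap.toContinuousLinearMap (Matrix.toLin' ((hessM (gt ↑t) u).transpose)))
        Set.univ u :=
      fun u _ => (aux_hasFDeriv_gradv (hgs ↑t) u).hasFDerivWithinAt
    have hinj : Set.InjOn (gradv (gt ↑t)) Set.univ := hbijt.injOn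
    have hchg := integral_image_eq_integral_abs_det_fderiv_smul volume
      MeasurableSet.univ hfd hinj (fun x => d (G t x))
    rw [himg, Measure.restrict_univ] at hchg
    rw [hchg]
    apply integral_congr_ae
    apply Filter.Eventually.of_forall
    intro u
    have hdet : (LinearMap.toContinuousLinearMap
        (Matrix.toLin' ((hessM (gt ↑t) u).transpose))).det = (hessM (gt ↑t) u).det := by
      rw [ContinuousLinearMap.det]
      rw [LinearMap.coe_toContinuousLinearMap]
      rw [LinearMap.det_toLin', Matrix.det_transpose]
    have hGgrad : G t (gradv (gt ↑t) u) = u := by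
      have hmem : gradv (gt ↑t) u ∈ interior Δ := hbijt.mapsTo (Set.mem_univ u)
      have h1 : gradv (gt ↑t) (G t (gradv (gt ↑t) u)) = gradv (gt ↑t) u :=
        hGinv t _ hmem
      exact hinj (Set.mem_univ _) (Set.mem_univ _) h1
    simp only [smul_eq_mul]
    rw [hdet, hGgrad]
    simp only [hdd]
    ring
  -- put everything together
  rw [hLHS, hsq]
  rw [← intervalIntegral.integral_neg]
  apply intervalIntegral.integral_congr
  intro t ht
  rw [Set.uIcc_of_le zero_le_one] at ht
  have : (∫ u : Fin n → ℝ, (g₁ u - g₀ u) * |(hessM (gt t) u).det|)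
      = ∫ x in interior Δ, d (G ⟨t, ht⟩ x) := hcov ⟨t, ht⟩
  simp only [hMdef, dif_pos ht]
  rw [integral_neg, ← this]
end
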